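/- arXiv:2008.04362 — 4 statements merged into one kernel-verified Lean document; each statement's English description precedes it below -/
import Mathlib

section
/- For every p ∈ [1,2], the family of functions C_{1,p}(ρ) = min{ℓ_{1,p}(ρ − σ) : σ ∈ I_n} (ρ ∈ D_n, n ∈ ℕ) satisfies all four conditions (B1), (B2), (B3), (B4); that is, C_{1,p} is a coherence measure. -/
open scoped ENNReal ComplexOrder
open Matrix

noncomputable section

/-- The `ℓ_p` norm of a complex vector, `p ∈ [1,∞]`. -/
def lpV (p : ℝ≥0∞) {n : ℕ} (v : Fin n → ℂ) : ℝ :=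
  if p = ∞ then ⨆ i, ‖v i‖ else (∑ i, ‖v i‖ ^ p.toReal) ^ (1 / p.toReal)

/-- The `ℓ_{q,p}` norm of a complex matrix: the `ℓ_q` norm of the vector of
`ℓ_p` norms of its columns. -/
def lqp (q p : ℝ≥0∞) {m n : ℕ} (A : Matrix (Fin m) (Fin n) ℂ) : ℝ :=
  lpV q fun j => ((lpV p fun i => A i j : ℝ) : ℂ)

/-- A density matrix: positive semidefinite with trace one. -/
def IsDensity {n : ℕ} (ρ : Matrix (Fin n) (Fin n) ℂ) : Prop :=
  ρ.PosSemidef ∧ ρ.trace = 1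

/-- An incoherent (classical) state: a diagonal density matrix. -/
def IsIncoherentState {n : ℕ} (ρ : Matrix (Fin n) (Fin n) ℂ) : Prop :=
  IsDensity ρ ∧ ρ.IsDiag

/-- `C_ν(ρ) = min {ν(ρ - σ) : σ ∈ I_n}` (as an infimum). -/
def distC {n : ℕ} (ν : Matrix (Fin n) (Fin n) ℂ → ℝ) (ρ : Matrix (Fin n) (Fin n) ℂ) : ℝ :=
  sInf {x | ∃ σ, IsIncoherentState σ ∧ x = ν (ρ - σ)}

/-- A set of incoherent Kraus operators `K_j : M_{m,n}`:
`∑ K_j† K_j = I` and each `K_j σ K_j†` is diagonal for diagonal densities `σ`. -/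
def IsIncoherentKraus {m n r : ℕ} (K : Fin r → Matrix (Fin m) (Fin n) ℂ) : Prop :=
  (∑ j, (K j)ᴴ * K j) = 1 ∧
  ∀ j (σ : Matrix (Fin n) (Fin n) ℂ), IsIncoherentState σ → (K j * σ * (K j)ᴴ).IsDiag

/-- A family of candidate coherence measures, one for each dimension. -/
abbrev CFam := ∀ n : ℕ, Matrix (Fin n) (Fin n) ℂ → ℝ

/-- Condition (B1) = (C1): nonnegativity, vanishing exactly on incoherent states. -/
def CondB1 (C : CFam) : Prop :=
  ∀ n (ρ : Matrix (Fin n) (Fin n) ℂ), IsDensity ρ →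
    0 ≤ C n ρ ∧ (C n ρ = 0 ↔ IsIncoherentState ρ)

/-- Condition (B2) = (C2): monotonicity under incoherent operations. -/
def CondB2 (C : CFam) : Prop :=
  ∀ (n m r : ℕ) (K : Fin r → Matrix (Fin m) (Fin n) ℂ), IsIncoherentKraus K →
    ∀ ρ, IsDensity ρ → C m (∑ j, K j * ρ * (K j)ᴴ) ≤ C n ρ

/-- Condition (B3): monotonicity on average under selective incoherent operations. -/
def CondB3 (C : CFam) : Prop :=
  ∀ (n m r : ℕ) (K : Fin r → Matrix (Fin m) (Fin n) ℂ), IsIncoherentKraus K →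
    ∀ ρ, IsDensity ρ →
      ∑ j, ((K j * ρ * (K j)ᴴ).trace).re *
          C m (((((K j * ρ * (K j)ᴴ).trace).re)⁻¹ : ℂ) • (K j * ρ * (K j)ᴴ)) ≤ C n ρ

/-- Condition (B4): convexity. -/
def CondB4 (C : CFam) : Prop :=
  ∀ (n r : ℕ) (ρ : Fin r → Matrix (Fin n) (Fin n) ℂ) (p : Fin r → ℝ),
    (∀ j, IsDensity (ρ j)) → (∀ j, 0 ≤ p j) → (∑ j, p j) = 1 →
    C n (∑ j, (p j : ℂ) • ρ j) ≤ ∑ j, p j * C n (ρ j)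

/-- Block diagonal direct sum of two square matrices, reindexed to `Fin (n₁ + n₂)`. -/
def dirSum {n₁ n₂ : ℕ} (A : Matrix (Fin n₁) (Fin n₁) ℂ) (B : Matrix (Fin n₂) (Fin n₂) ℂ) :
    Matrix (Fin (n₁ + n₂)) (Fin (n₁ + n₂)) ℂ :=
  (Matrix.fromBlocks A 0 0 B).submatrix finSumFinEquiv.symm finSumFinEquiv.symm

/-- Condition (C3): additivity under direct sum convex combinations. -/
def CondC3 (C : CFam) : Prop :=
  ∀ (n₁ n₂ : ℕ) (ρ₁ : Matrix (Fin n₁) (Fin n₁) ℂ) (ρ₂ : Matrix (Fin n₂) (Fin n₂) ℂ)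
    (p₁ p₂ : ℝ), IsDensity ρ₁ → IsDensity ρ₂ → 0 ≤ p₁ → 0 ≤ p₂ → p₁ + p₂ = 1 →
    C (n₁ + n₂) (dirSum ((p₁ : ℂ) • ρ₁) ((p₂ : ℂ) • ρ₂)) = p₁ * C n₁ ρ₁ + p₂ * C n₂ ρ₂

/-- A norm on `M_n(ℂ)` (nonnegativity is automatic). -/
def IsMatrixNorm {n : ℕ} (ν : Matrix (Fin n) (Fin n) ℂ → ℝ) : Prop :=
  (∀ A, ν A = 0 ↔ A = 0) ∧ (∀ (c : ℂ) A, ν (c • A) = ‖c‖ * ν A) ∧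
  (∀ A B, ν (A + B) ≤ ν A + ν B)

/-!
For a density matrix the nearest incoherent state in `ℓ_{1,p}` is its diagonal part, so
`C_{1,p}(ρ)` is the `ℓ_{1,p}` norm of the off-diagonal part of `ρ`. That gives (B1) and, because a
norm of a linear image is convex, (B4).

For (B2) and (B3): an incoherent Kraus operator has at most one nonzero entry in each column. So it
maps diagonal matrices to diagonal matrices, and each column of `K ρ K†` combines the vectors
`K x_d`, where the `x_d` are the off-diagonal columns of `ρ`. After Cauchy–Schwarz over the Kraus
index, everything comes down to `∑ⱼ ‖Kⱼ x‖ₚ² ≤ ‖x‖ₚ²`. This holds at `p = 1`, because every column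
of the stacked operator has unit `ℓ²` norm, and at `p = 2`, because the stacked operator is an
isometry. For `1 ≤ p ≤ 2` it follows by complex interpolation: apply Hadamard's three lines
theorem to the pairing of an analytic family through `x` with analytic families through
the norming functionals of the `Kⱼ x`.
-/

open WithLp

section ColumnNorms

variable {p : ℝ≥0∞}

lemma lpV_eq_norm_toLp (hp : p ≠ 0) {n : ℕ} (v : Fin n → ℂ) : lpV p v = ‖toLp p v‖ := by
  unfold lpV
  split_ifs with h
  · subst h
    rfl
  · rw [PiLp.norm_eq_sum (ENNReal.toReal_pos hp h)]

lemma norm_toLp_rpow_toReal {ι : Type*} [Fintype ι] (hp : 0 < p.toReal) (v : ι → ℂ) :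
    ‖toLp p v‖ ^ p.toReal = ∑ i, ‖v i‖ ^ p.toReal := by
  rw [PiLp.norm_eq_sum hp, ← Real.rpow_mul (Finset.sum_nonneg fun _ _ => by positivity),
    one_div_mul_cancel hp.ne', Real.rpow_one]

lemma norm_toLp_le_of_forall_norm_le {ι : Type*} [Fintype ι] {v w : ι → ℂ}
    (h : ∀ i, ‖v i‖ ≤ ‖w i‖) : ‖toLp p v‖ ≤ ‖toLp p w‖ := by
  rcases p.trichotomy with rfl | rfl | hp
  · simp only [PiLp.norm_eq_card]
    refine Nat.cast_le.2 (Finset.card_le_card fun i => ?_)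
    simp only [Set.Finite.mem_toFinset, Set.mem_ofPred_eq, norm_ne_zero_iff]
    exact fun hv => norm_pos_iff.1 ((norm_pos_iff.2 hv).trans_le (h i))
  · exact ciSup_mono (Finite.bddAbove_range _) h
  · rw [PiLp.norm_eq_sum hp, PiLp.norm_eq_sum hp]
    gcongr with i
    exact h i

variable {m n : Type*} [Fintype m] [Fintype n]

def colLp (p : ℝ≥0∞) : Matrix m n ℂ →ₗ[ℂ] PiLp 1 (fun _ : n => PiLp p (fun _ : m => ℂ)) where
  toFun A := toLp 1 fun b => toLp p fun a => A a b
  map_add' _ _ := rfl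
  map_smul' _ _ := rfl

variable [Fact (1 ≤ p)]

lemma norm_colLp (A : Matrix m n ℂ) : ‖colLp p A‖ = ∑ b, ‖toLp p fun a => A a b‖ :=
  PiLp.norm_eq_of_L1 _

lemma norm_colLp_eq_zero_iff {A : Matrix m n ℂ} : ‖colLp p A‖ = 0 ↔ A = 0 := by
  rw [norm_eq_zero]
  refine ⟨fun h => ?_, fun h => by rw [h, map_zero]⟩
  ext a b
  exact congr($h b a)

lemma lqp_one_eq_norm_colLp {m n : ℕ} (A : Matrix (Fin m) (Fin n) ℂ) :
    lqp 1 p A = ‖colLp p A‖ := by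
  have hp : p ≠ 0 := (zero_lt_one.trans_le Fact.out).ne'
  rw [lqp, lpV_eq_norm_toLp one_ne_zero, PiLp.norm_eq_of_L1, norm_colLp]
  refine Finset.sum_congr rfl fun b _ => ?_
  simp [lpV_eq_norm_toLp hp]

lemma norm_colLp_le_of_forall_norm_le {A B : Matrix m n ℂ} (h : ∀ a b, ‖A a b‖ ≤ ‖B a b‖) :
    ‖colLp p A‖ ≤ ‖colLp p B‖ := by
  rw [norm_colLp, norm_colLp]
  gcongr with b
  exact norm_toLp_le_of_forall_norm_le fun a => h a b

lemma norm_colLp_mul_conjTranspose_le {k : Type*} [Fintype k] (Y : Matrix m n ℂ)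
    (B : Matrix k n ℂ) : ‖colLp p (Y * Bᴴ)‖ ≤ ∑ d, (∑ b, ‖B b d‖) * ‖toLp p fun a => Y a d‖ := by
  have hcol (b : k) :
      (toLp p fun a => (Y * Bᴴ) a b) = ∑ d, star (B b d) • toLp p fun a => Y a d := by
    simp only [← WithLp.toLp_smul, ← WithLp.toLp_sum]
    congr 1
    funext a
    simp [mul_apply, mul_comm]
  calc ‖colLp p (Y * Bᴴ)‖ ≤ ∑ b, ∑ d, ‖B b d‖ * ‖toLp p fun a => Y a d‖ := by
        rw [norm_colLp]
        refine Finset.sum_le_sum fun b _ => ?_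
        rw [hcol]
        refine (norm_sum_le _ _).trans_eq ?_
        simp [norm_smul]
    _ = ∑ d, (∑ b, ‖B b d‖) * ‖toLp p fun a => Y a d‖ := by
        rw [Finset.sum_comm]
        simp only [Finset.sum_mul]

end ColumnNorms

section OffDiag

variable {n R : Type*} [DecidableEq n] [CommRing R]

def offDiag : Matrix n n R →ₗ[R] Matrix n n R :=
  LinearMap.id - (diagonalLinearMap n R R).comp (diagLinearMap n R R)

lemma offDiag_apply (A : Matrix n n R) (i j : n) :
    offDiag A i j = if i = j then 0 else A i j := by
  by_cases h : i = j
  · subst h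
    simp [offDiag]
  · simp [offDiag, h]

lemma offDiag_add_diagonal_diag (A : Matrix n n R) : offDiag A + diagonal A.diag = A :=
  sub_add_cancel A _

lemma offDiag_eq_zero_iff {A : Matrix n n R} : offDiag A = 0 ↔ A.IsDiag := by
  refine ⟨fun h i j hij => ?_, fun h => ?_⟩
  · simpa [offDiag_apply, hij] using congr_fun₂ h i j
  · ext i j
    by_cases hij : i = j <;> simp [offDiag_apply, hij, h _]

lemma offDiag_add_of_isDiag (A : Matrix n n R) {D : Matrix n n R} (hD : D.IsDiag) :
    offDiag (A + D) = offDiag A := by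
  rw [map_add, offDiag_eq_zero_iff.2 hD, add_zero]

lemma norm_colLp_offDiag_le [Fintype n] {p : ℝ≥0∞} [Fact (1 ≤ p)] (A : Matrix n n ℂ) :
    ‖colLp p (offDiag A)‖ ≤ ‖colLp p A‖ :=
  norm_colLp_le_of_forall_norm_le fun a b => by
    rw [offDiag_apply]
    split_ifs <;> simp

end OffDiag

section SparseColumns

variable {m n : Type*}

def AtMostOneNonzeroPerColumn (A : Matrix m n ℂ) : Prop :=
  ∀ c a b, a ≠ b → A a c = 0 ∨ A b c = 0

namespace AtMostOneNonzeroPerColumn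

variable {A : Matrix m n ℂ}

lemma isDiag_mul_diagonal_mul_conjTranspose [Fintype n] [DecidableEq n]
    (hA : AtMostOneNonzeroPerColumn A) (d : n → ℂ) : (A * diagonal d * Aᴴ).IsDiag := by
  intro a b hab
  rw [mul_apply]
  simp only [mul_diagonal, conjTranspose_apply]
  refine Finset.sum_eq_zero fun c _ => ?_
  rcases hA c a b hab with h | h <;> simp [h]

lemma offDiag_mul_offDiag_mul_conjTranspose [Fintype n] [DecidableEq m] [DecidableEq n]
    (hA : AtMostOneNonzeroPerColumn A) (X : Matrix n n ℂ) :
    offDiag (A * offDiag X * Aᴴ) = offDiag (A * X * Aᴴ) := by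
  conv_rhs => rw [← offDiag_add_diagonal_diag X, Matrix.mul_add, Matrix.add_mul]
  exact (offDiag_add_of_isDiag _ (hA.isDiag_mul_diagonal_mul_conjTranspose _)).symm

lemma sum_norm_sq [Fintype m] (hA : AtMostOneNonzeroPerColumn A) (c : n) :
    (∑ a, ‖A a c‖) ^ 2 = ∑ a, ‖A a c‖ ^ 2 := by
  by_cases h : ∃ a₀, A a₀ c ≠ 0
  · obtain ⟨a₀, ha₀⟩ := h
    have hzero (b : m) (hb : b ≠ a₀) : A b c = 0 := (hA c b a₀ hb).resolve_right ha₀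
    rw [Finset.sum_eq_single a₀ (fun b _ hb => by simp [hzero b hb]) (by simp),
      Finset.sum_eq_single a₀ (fun b _ hb => by simp [hzero b hb]) (by simp)]
  · push Not at h
    simp [h]

end AtMostOneNonzeroPerColumn

lemma IsIncoherentKraus.atMostOneNonzeroPerColumn {m n r : ℕ}
    {K : Fin r → Matrix (Fin m) (Fin n) ℂ} (hK : IsIncoherentKraus K) (j : Fin r) :
    AtMostOneNonzeroPerColumn (K j) := by
  intro c a b hab
  have hσ : IsIncoherentState (diagonal (Pi.single c 1) : Matrix (Fin n) (Fin n) ℂ) := by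
    refine ⟨⟨PosSemidef.diagonal fun i => ?_, by simp [trace_diagonal]⟩, isDiag_diagonal _⟩
    by_cases h : i = c <;> simp [h]
  have hab' : (K j * diagonal (Pi.single c (1 : ℂ)) * (K j)ᴴ) a b = 0 := hK.2 j _ hσ hab
  rw [mul_apply, Finset.sum_eq_single c (fun d _ hd => by simp [hd]) (by simp)] at hab'
  simpa using hab'

end SparseColumns

section KrausBounds

variable {m n r : Type*} [Fintype m] [Fintype n] [Fintype r] [DecidableEq n]
  {K : r → Matrix m n ℂ}

omit [Fintype n] [DecidableEq n] in
lemma dotProduct_star_self_eq_sum_norm_sq (x : m → ℂ) :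
    star x ⬝ᵥ x = ((∑ a, ‖x a‖ ^ 2 : ℝ) : ℂ) := by
  simp [dotProduct, Complex.conj_mul']

omit [Fintype n] [DecidableEq n] in
lemma norm_dotProduct_le (φ x : m → ℂ) : ‖φ ⬝ᵥ x‖ ≤ ∑ a, ‖φ a‖ * ‖x a‖ :=
  (norm_sum_le _ _).trans_eq (by simp only [norm_mul])

omit [Fintype m] [DecidableEq n] in
lemma norm_mulVec_apply_le (A : Matrix m n ℂ) (w : n → ℂ) (a : m) :
    ‖(A *ᵥ w) a‖ ≤ ∑ c, ‖A a c‖ * ‖w c‖ :=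
  norm_dotProduct_le _ _

lemma sum_sum_norm_sq_mulVec (hK : ∑ j, (K j)ᴴ * K j = 1) (w : n → ℂ) :
    ∑ j, ∑ a, ‖(K j *ᵥ w) a‖ ^ 2 = ∑ c, ‖w c‖ ^ 2 := by
  have h : ∑ j, star (K j *ᵥ w) ⬝ᵥ (K j *ᵥ w) = star w ⬝ᵥ w := by
    simp only [star_mulVec, dotProduct_mulVec, vecMul_vecMul, ← sum_dotProduct, ← vecMul_sum,
      hK, vecMul_one]
  simp only [dotProduct_star_self_eq_sum_norm_sq, ← Complex.ofReal_sum] at h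
  exact_mod_cast h

lemma sum_sq_sum_norm_col (hsp : ∀ j, AtMostOneNonzeroPerColumn (K j))
    (hK : ∑ j, (K j)ᴴ * K j = 1) (c : n) : ∑ j, (∑ a, ‖K j a c‖) ^ 2 = 1 := by
  simpa [(hsp _).sum_norm_sq, mulVec_single_one, Pi.single_apply,
    apply_ite (fun x : ℂ => ‖x‖ ^ 2)] using sum_sum_norm_sq_mulVec hK (Pi.single c 1)

lemma norm_sum_dotProduct_mulVec_le_of_norm_le (hsp : ∀ j, AtMostOneNonzeroPerColumn (K j))
    (hK : ∑ j, (K j)ᴴ * K j = 1) {φ : r → m → ℂ} {s : r → ℝ} (hφ : ∀ j a, ‖φ j a‖ ≤ s j)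
    (w : n → ℂ) : ‖∑ j, φ j ⬝ᵥ (K j *ᵥ w)‖ ≤ √(∑ j, s j ^ 2) * ∑ c, ‖w c‖ := by
  have hcol (c : n) : ∑ j, s j * ∑ a, ‖K j a c‖ ≤ √(∑ j, s j ^ 2) := by
    simpa [sum_sq_sum_norm_col hsp hK c] using
      Real.sum_mul_le_sqrt_mul_sqrt Finset.univ s (fun j => ∑ a, ‖K j a c‖)
  calc ‖∑ j, φ j ⬝ᵥ (K j *ᵥ w)‖
      ≤ ∑ j, ∑ a, ‖φ j a‖ * ‖(K j *ᵥ w) a‖ :=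
        (norm_sum_le _ _).trans (Finset.sum_le_sum fun j _ => norm_dotProduct_le _ _)
    _ ≤ ∑ j, ∑ a, s j * ∑ c, ‖K j a c‖ * ‖w c‖ :=
        Finset.sum_le_sum fun j _ => Finset.sum_le_sum fun a _ =>
          mul_le_mul (hφ j a) (norm_mulVec_apply_le (K j) w a) (norm_nonneg _)
            ((norm_nonneg _).trans (hφ j a))
    _ = ∑ c, (∑ j, s j * ∑ a, ‖K j a c‖) * ‖w c‖ := by
        simp only [Finset.mul_sum, Finset.sum_mul, mul_assoc]
        exact (Finset.sum_congr rfl fun j _ => Finset.sum_comm).trans Finset.sum_comm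
    _ ≤ ∑ c, √(∑ j, s j ^ 2) * ‖w c‖ := by gcongr with c; exact hcol c
    _ = √(∑ j, s j ^ 2) * ∑ c, ‖w c‖ := (Finset.mul_sum _ _ _).symm

lemma norm_sum_dotProduct_mulVec_le_of_sum_norm_sq_le (hK : ∑ j, (K j)ᴴ * K j = 1)
    {φ : r → m → ℂ} {s : r → ℝ} (hφ : ∀ j, ∑ a, ‖φ j a‖ ^ 2 ≤ s j ^ 2) (w : n → ℂ) :
    ‖∑ j, φ j ⬝ᵥ (K j *ᵥ w)‖ ≤ √(∑ j, s j ^ 2) * √(∑ c, ‖w c‖ ^ 2) := by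
  have hrow (j : r) : ‖φ j ⬝ᵥ (K j *ᵥ w)‖ ≤ |s j| * √(∑ a, ‖(K j *ᵥ w) a‖ ^ 2) := by
    refine (norm_dotProduct_le _ _).trans ((Real.sum_mul_le_sqrt_mul_sqrt _ _ _).trans ?_)
    gcongr
    rw [← Real.sqrt_sq_eq_abs]
    exact Real.sqrt_le_sqrt (hφ j)
  calc ‖∑ j, φ j ⬝ᵥ (K j *ᵥ w)‖
      ≤ ∑ j, |s j| * √(∑ a, ‖(K j *ᵥ w) a‖ ^ 2) :=
        (norm_sum_le _ _).trans (Finset.sum_le_sum fun j _ => hrow j)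
    _ ≤ √(∑ j, |s j| ^ 2) * √(∑ j, √(∑ a, ‖(K j *ᵥ w) a‖ ^ 2) ^ 2) :=
        Real.sum_mul_le_sqrt_mul_sqrt _ _ _
    _ = √(∑ j, s j ^ 2) * √(∑ c, ‖w c‖ ^ 2) := by
        simp only [sq_abs, Real.sq_sqrt (Finset.sum_nonneg fun _ _ => sq_nonneg _),
          sum_sum_norm_sq_mulVec hK]

end KrausBounds

section ModPow

/-- The phase of `w` times `‖w‖ ^ s`; entire in `s`. -/
def modPow (w s : ℂ) : ℂ := w * (‖w‖ : ℂ) ^ (s - 1)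

@[simp] lemma modPow_zero_left (s : ℂ) : modPow 0 s = 0 := by simp [modPow]

@[simp] lemma modPow_one (w : ℂ) : modPow w 1 = w := by simp [modPow]

lemma norm_modPow_of_ne_zero {w : ℂ} (hw : w ≠ 0) (s : ℂ) : ‖modPow w s‖ = ‖w‖ ^ s.re := by
  have hw' : 0 < ‖w‖ := norm_pos_iff.2 hw
  rw [modPow, norm_mul, Complex.norm_cpow_eq_rpow_re_of_pos hw', Complex.sub_re,
    Complex.one_re, Real.rpow_sub_one hw'.ne', mul_div_cancel₀ _ hw'.ne']

lemma norm_modPow {s : ℂ} (hs : 0 < s.re) (w : ℂ) : ‖modPow w s‖ = ‖w‖ ^ s.re := by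
  rcases eq_or_ne w 0 with rfl | hw
  · simp [Real.zero_rpow hs.ne']
  · exact norm_modPow_of_ne_zero hw s

lemma norm_modPow_le_one {w s : ℂ} (hw : ‖w‖ ≤ 1) (hs : 0 ≤ s.re) : ‖modPow w s‖ ≤ 1 := by
  rcases eq_or_ne w 0 with rfl | hw0
  · simp
  · rw [norm_modPow_of_ne_zero hw0]
    exact Real.rpow_le_one (norm_nonneg _) hw hs

lemma norm_modPow_le_max {w s : ℂ} {a b : ℝ} (hs : s.re ∈ Set.Icc a b) (ha : 0 < a) :
    ‖modPow w s‖ ≤ max 1 (‖w‖ ^ b) := by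
  rw [norm_modPow (ha.trans_le hs.1)]
  rcases le_total ‖w‖ 1 with h | h
  · exact le_max_of_le_left (Real.rpow_le_one (norm_nonneg _) h (ha.le.trans hs.1))
  · exact le_max_of_le_right (Real.rpow_le_rpow_of_exponent_le h hs.2)

lemma modPow_star_mul_self {s : ℝ} (hs : 0 < s + 1) (w : ℂ) :
    modPow (star w) s * w = ((‖w‖ ^ (s + 1) : ℝ) : ℂ) := by
  rcases eq_or_ne w 0 with rfl | hw
  · simp [Real.zero_rpow hs.ne']
  · have hw' : 0 < ‖w‖ := norm_pos_iff.2 hw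
    have hsplit : ‖w‖ ^ (s + 1) = ‖w‖ ^ 2 * ‖w‖ ^ (s - 1) := by
      rw [← Real.rpow_two, ← Real.rpow_add hw']
      ring_nf
    rw [modPow, norm_star, ← Complex.ofReal_one, ← Complex.ofReal_sub,
      ← Complex.ofReal_cpow hw'.le, hsplit, mul_right_comm, Complex.star_def, Complex.conj_mul']
    push_cast
    ring

lemma differentiable_modPow (w : ℂ) {f : ℂ → ℂ} (hf : Differentiable ℂ f) :
    Differentiable ℂ fun z => modPow w (f z) := by
  rcases eq_or_ne w 0 with rfl | hw
  · simp only [modPow_zero_left]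
    exact differentiable_const 0
  · have hw' : (‖w‖ : ℂ) ≠ 0 := by exact_mod_cast norm_ne_zero_iff.2 hw
    exact (hf.sub_const 1).const_cpow (Or.inl hw') |>.const_mul w

end ModPow

section Interpolation

variable {m n : Type*} {p : ℝ≥0∞}

def interpPrimal (p : ℝ≥0∞) (u : n → ℂ) (z : ℂ) : n → ℂ :=
  fun c => modPow (u c) (p.toReal * (1 - z / 2))

def interpDual [Fintype m] (p : ℝ≥0∞) (y : m → ℂ) (z : ℂ) : m → ℂ :=
  fun a => ‖toLp p y‖ * modPow (star ((‖toLp p y‖ : ℂ)⁻¹ * y a)) (p.toReal * z / 2)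

@[fun_prop]
lemma differentiable_interpPrimal (p : ℝ≥0∞) (u : n → ℂ) (c : n) :
    Differentiable ℂ fun z => interpPrimal p u z c :=
  differentiable_modPow _ (by fun_prop)

@[fun_prop]
lemma differentiable_interpDual [Fintype m] (p : ℝ≥0∞) (y : m → ℂ) (a : m) :
    Differentiable ℂ fun z => interpDual p y z a :=
  (differentiable_modPow _ (by fun_prop)).const_mul _

lemma re_mul_one_sub_half (P : ℝ) (z : ℂ) : (P * (1 - z / 2)).re = P * (1 - z.re / 2) := by
  simp

lemma norm_interpPrimal_le (hp : 0 < p.toReal) (u : n → ℂ) {z : ℂ} (hz : z.re ∈ Set.Icc 0 1)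
    (c : n) : ‖interpPrimal p u z c‖ ≤ max 1 (‖u c‖ ^ p.toReal) := by
  refine norm_modPow_le_max (a := p.toReal / 2) ?_ (by positivity)
  rw [re_mul_one_sub_half]
  constructor <;> nlinarith [hz.1, hz.2]

lemma sum_norm_interpPrimal_of_re_eq_zero [Fintype n] (hp : 0 < p.toReal) (u : n → ℂ) {z : ℂ}
    (hz : z.re = 0) : ∑ c, ‖interpPrimal p u z c‖ = ‖toLp p u‖ ^ p.toReal := by
  rw [norm_toLp_rpow_toReal hp]
  refine Finset.sum_congr rfl fun c _ => ?_
  rw [interpPrimal, norm_modPow (by simp [hz, hp]), re_mul_one_sub_half, hz]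
  simp

lemma sum_norm_sq_interpPrimal_of_re_eq_one [Fintype n] (hp : 0 < p.toReal) (u : n → ℂ) {z : ℂ}
    (hz : z.re = 1) : ∑ c, ‖interpPrimal p u z c‖ ^ 2 = ‖toLp p u‖ ^ p.toReal := by
  rw [norm_toLp_rpow_toReal hp]
  refine Finset.sum_congr rfl fun c _ => ?_
  rw [interpPrimal, norm_modPow (by rw [re_mul_one_sub_half, hz]; linarith),
    re_mul_one_sub_half, hz, ← Real.rpow_natCast, ← Real.rpow_mul (norm_nonneg _)]
  ring_nf

lemma interpPrimal_ofReal_eq_self (hp : 0 < p.toReal) (u : n → ℂ) :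
    interpPrimal p u ((2 - 2 / p.toReal : ℝ) : ℂ) = u := by
  funext c
  have h : (p.toReal : ℂ) * (1 - ((2 - 2 / p.toReal : ℝ) : ℂ) / 2) = 1 := by
    push_cast
    field_simp
    ring
  simp only [interpPrimal]
  rw [h, modPow_one]

variable [Fintype m] [Fact (1 ≤ p)]

lemma norm_inv_norm_mul_apply_le_one (y : m → ℂ) (a : m) :
    ‖(‖toLp p y‖ : ℂ)⁻¹ * y a‖ ≤ 1 := by
  rw [norm_mul, norm_inv, Complex.norm_real, norm_norm]
  exact inv_mul_le_one_of_le₀ (PiLp.norm_apply_le (toLp p y) a) (norm_nonneg _)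

lemma sum_norm_inv_norm_mul_apply_rpow (hp : 0 < p.toReal) {y : m → ℂ} (hy : toLp p y ≠ 0) :
    ∑ a, ‖(‖toLp p y‖ : ℂ)⁻¹ * y a‖ ^ p.toReal = 1 := by
  have h := norm_toLp_rpow_toReal hp ((‖toLp p y‖ : ℂ)⁻¹ • y)
  rw [WithLp.toLp_smul, norm_smul, norm_inv, Complex.norm_real, norm_norm,
    inv_mul_cancel₀ (norm_ne_zero_iff.2 hy), Real.one_rpow] at h
  exact h.symm

lemma norm_interpDual_le (y : m → ℂ) {z : ℂ} (hz : 0 ≤ z.re) (a : m) :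
    ‖interpDual p y z a‖ ≤ ‖toLp p y‖ := by
  rw [interpDual, norm_mul, Complex.norm_real, norm_norm]
  refine mul_le_of_le_one_right (norm_nonneg _) (norm_modPow_le_one ?_ ?_)
  · rw [norm_star]
    exact norm_inv_norm_mul_apply_le_one y a
  · have hre : (p.toReal * z / 2 : ℂ).re = p.toReal * z.re / 2 := by simp
    rw [hre]
    positivity

lemma sum_norm_sq_interpDual_of_re_eq_one (hp : 0 < p.toReal) (y : m → ℂ) {z : ℂ}
    (hz : z.re = 1) : ∑ a, ‖interpDual p y z a‖ ^ 2 = ‖toLp p y‖ ^ 2 := by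
  rcases eq_or_ne (toLp p y) 0 with hy | hy
  · simp [interpDual, hy]
  have hre : (p.toReal * z / 2 : ℂ).re = p.toReal / 2 := by simp [hz]
  have hterm (a : m) : ‖interpDual p y z a‖ ^ 2
      = ‖toLp p y‖ ^ 2 * ‖(‖toLp p y‖ : ℂ)⁻¹ * y a‖ ^ p.toReal := by
    rw [interpDual, norm_mul, Complex.norm_real, norm_norm, norm_modPow (by rw [hre]; positivity),
      norm_star, hre, mul_pow, ← Real.rpow_natCast (_ ^ _), ← Real.rpow_mul (norm_nonneg _)]
    ring_nf
  rw [Finset.sum_congr rfl fun a _ => hterm a, ← Finset.mul_sum,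
    sum_norm_inv_norm_mul_apply_rpow hp hy, mul_one]

lemma interpDual_ofReal_dotProduct_self (hp : 1 ≤ p.toReal) (y : m → ℂ) :
    interpDual p y ((2 - 2 / p.toReal : ℝ) : ℂ) ⬝ᵥ y = (‖toLp p y‖ : ℂ) ^ 2 := by
  rcases eq_or_ne y 0 with rfl | hy
  · simp
  have hy' : toLp p y ≠ 0 := by simpa using hy
  have hN : (‖toLp p y‖ : ℂ) ≠ 0 := by exact_mod_cast norm_ne_zero_iff.2 hy'
  have hexp : (p.toReal : ℂ) * ((2 - 2 / p.toReal : ℝ) : ℂ) / 2 = ((p.toReal - 1 : ℝ) : ℂ) := by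
    push_cast
    field_simp
  have hterm (a : m) : interpDual p y ((2 - 2 / p.toReal : ℝ) : ℂ) a * y a
      = (‖toLp p y‖ : ℂ) ^ 2 * ((‖(‖toLp p y‖ : ℂ)⁻¹ * y a‖ ^ p.toReal : ℝ) : ℂ) := by
    rw [interpDual, hexp]
    set x := (‖toLp p y‖ : ℂ)⁻¹ * y a with hx
    have hmod := modPow_star_mul_self (s := p.toReal - 1) (by linarith) x
    rw [sub_add_cancel] at hmod
    rw [show y a = ‖toLp p y‖ * x by rw [hx, mul_inv_cancel_left₀ hN], ← hmod]
    ring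
  rw [dotProduct, Finset.sum_congr rfl fun a _ => hterm a, ← Finset.mul_sum,
    ← Complex.ofReal_sum, sum_norm_inv_norm_mul_apply_rpow (by linarith) hy', Complex.ofReal_one,
    mul_one]

variable [Fintype n] {r : Type*} [Fintype r]

def interpPairing (p : ℝ≥0∞) (K : r → Matrix m n ℂ) (u : n → ℂ) (z : ℂ) : ℂ :=
  ∑ j, interpDual p (K j *ᵥ u) z ⬝ᵥ (K j *ᵥ interpPrimal p u z)

omit [Fact (1 ≤ p)] in
lemma differentiable_interpPairing (p : ℝ≥0∞) (K : r → Matrix m n ℂ) (u : n → ℂ) :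
    Differentiable ℂ (interpPairing p K u) := by
  show Differentiable ℂ fun z =>
    ∑ j, ∑ a, interpDual p (K j *ᵥ u) z a * ∑ c, K j a c * interpPrimal p u z c
  fun_prop

lemma interpPairing_ofReal (hp : 1 ≤ p.toReal) (K : r → Matrix m n ℂ) (u : n → ℂ) :
    interpPairing p K u ((2 - 2 / p.toReal : ℝ) : ℂ)
      = ((∑ j, ‖toLp p (K j *ᵥ u)‖ ^ 2 : ℝ) : ℂ) := by
  simp only [interpPairing, interpPrimal_ofReal_eq_self (zero_lt_one.trans_le hp),
    interpDual_ofReal_dotProduct_self hp]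
  push_cast
  rfl

variable [DecidableEq n] {K : r → Matrix m n ℂ}

lemma norm_interpPairing_le (hsp : ∀ j, AtMostOneNonzeroPerColumn (K j))
    (hK : ∑ j, (K j)ᴴ * K j = 1) (hp : 0 < p.toReal) (u : n → ℂ) {z : ℂ}
    (hz : z.re ∈ Set.Icc 0 1) :
    ‖interpPairing p K u z‖
      ≤ √(∑ j, ‖toLp p (K j *ᵥ u)‖ ^ 2) * ∑ c, max 1 (‖u c‖ ^ p.toReal) := by
  refine (norm_sum_dotProduct_mulVec_le_of_norm_le (φ := fun j => interpDual p (K j *ᵥ u) z)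
    hsp hK (fun j a => norm_interpDual_le _ hz.1 a) (interpPrimal p u z)).trans ?_
  gcongr with c
  exact norm_interpPrimal_le hp u hz c

lemma norm_interpPairing_le_of_re_eq_zero (hsp : ∀ j, AtMostOneNonzeroPerColumn (K j))
    (hK : ∑ j, (K j)ᴴ * K j = 1) (hp : 0 < p.toReal) (u : n → ℂ) {z : ℂ} (hz : z.re = 0) :
    ‖interpPairing p K u z‖ ≤ √(∑ j, ‖toLp p (K j *ᵥ u)‖ ^ 2) * ‖toLp p u‖ ^ p.toReal := by
  refine (norm_sum_dotProduct_mulVec_le_of_norm_le (φ := fun j => interpDual p (K j *ᵥ u) z)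
    hsp hK (fun j a => norm_interpDual_le _ hz.ge a) (interpPrimal p u z)).trans ?_
  rw [sum_norm_interpPrimal_of_re_eq_zero hp u hz]

lemma norm_interpPairing_le_of_re_eq_one (hK : ∑ j, (K j)ᴴ * K j = 1) (hp : 0 < p.toReal)
    (u : n → ℂ) {z : ℂ} (hz : z.re = 1) :
    ‖interpPairing p K u z‖
      ≤ √(∑ j, ‖toLp p (K j *ᵥ u)‖ ^ 2) * ‖toLp p u‖ ^ (p.toReal / 2) := by
  refine (norm_sum_dotProduct_mulVec_le_of_sum_norm_sq_le
    (φ := fun j => interpDual p (K j *ᵥ u) z) hK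
    (fun j => (sum_norm_sq_interpDual_of_re_eq_one hp _ hz).le) (interpPrimal p u z)).trans ?_
  rw [sum_norm_sq_interpPrimal_of_re_eq_one hp u hz, Real.sqrt_eq_rpow (_ ^ p.toReal),
    ← Real.rpow_mul (norm_nonneg _), mul_one_div]

lemma rpow_interp_eq_mul {M N P θ : ℝ} (hM : 0 ≤ M) (hN : 0 ≤ N)
    (h : P * (1 - θ / 2) = 1) :
    (M * N ^ P) ^ (1 - θ) * (M * N ^ (P / 2)) ^ θ = M * N := by
  have hexp : P * (1 - θ) + P / 2 * θ = 1 := by linarith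
  rw [Real.mul_rpow hM (Real.rpow_nonneg hN _), Real.mul_rpow hM (Real.rpow_nonneg hN _),
    ← Real.rpow_mul hN, ← Real.rpow_mul hN, mul_mul_mul_comm,
    ← Real.rpow_add' hM (by norm_num), ← Real.rpow_add' hN (by rw [hexp]; norm_num), hexp,
    sub_add_cancel, Real.rpow_one, Real.rpow_one]

open Complex.HadamardThreeLines in
theorem sum_sq_norm_toLp_mulVec_le (hp2 : p ≤ 2) (hsp : ∀ j, AtMostOneNonzeroPerColumn (K j))
    (hK : ∑ j, (K j)ᴴ * K j = 1) (u : n → ℂ) :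
    ∑ j, ‖toLp p (K j *ᵥ u)‖ ^ 2 ≤ ‖toLp p u‖ ^ 2 := by
  have hp : p ≠ ∞ := ne_top_of_le_ne_top ENNReal.ofNat_ne_top hp2
  have hP1 : 1 ≤ p.toReal := by simpa using ENNReal.toReal_mono hp (Fact.out : 1 ≤ p)
  have hP2 : p.toReal ≤ 2 := by simpa using ENNReal.toReal_mono ENNReal.ofNat_ne_top hp2
  have hP0 : 0 < p.toReal := by linarith
  have hθ : ((2 - 2 / p.toReal : ℝ) : ℂ) ∈ verticalClosedStrip 0 1 := by
    rw [verticalClosedStrip, Set.mem_preimage, Complex.ofReal_re]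
    constructor
    · rw [sub_nonneg, div_le_iff₀ hP0]; linarith
    · rw [sub_le_comm, le_div_iff₀ hP0]; linarith
  have h3 := norm_le_interp_of_mem_verticalClosedStrip₀₁' _ hθ
    (differentiable_interpPairing p K u).diffContOnCl
    ⟨_, by rintro _ ⟨z, hz, rfl⟩; exact norm_interpPairing_le hsp hK hP0 u hz⟩
    (fun z hz => norm_interpPairing_le_of_re_eq_zero hsp hK hP0 u hz)
    (fun z hz => norm_interpPairing_le_of_re_eq_one hK hP0 u hz)
  have hS : 0 ≤ ∑ j, ‖toLp p (K j *ᵥ u)‖ ^ 2 := Finset.sum_nonneg fun _ _ => sq_nonneg _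
  rw [interpPairing_ofReal hP1, Complex.norm_real, Real.norm_of_nonneg hS, Complex.ofReal_re,
    rpow_interp_eq_mul (Real.sqrt_nonneg _) (norm_nonneg _) (by field_simp; ring)] at h3
  -- `h3` now reads `S ≤ √S * ‖u‖ₚ`, where `S` is the left-hand side of the goal.
  have hsq := Real.sq_sqrt hS
  nlinarith [Real.sqrt_nonneg (∑ j, ‖toLp p (K j *ᵥ u)‖ ^ 2), norm_nonneg (toLp p u)]

end Interpolation

theorem sum_norm_colLp_offDiag_mul_mul_conjTranspose_le {m n r : Type*} [Fintype m] [Fintype n]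
    [Fintype r] [DecidableEq m] [DecidableEq n] {p : ℝ≥0∞} [Fact (1 ≤ p)] (hp2 : p ≤ 2)
    {K : r → Matrix m n ℂ} (hsp : ∀ j, AtMostOneNonzeroPerColumn (K j))
    (hK : ∑ j, (K j)ᴴ * K j = 1) (X : Matrix n n ℂ) :
    ∑ j, ‖colLp p (offDiag (K j * X * (K j)ᴴ))‖ ≤ ‖colLp p (offDiag X)‖ := by
  set x : n → n → ℂ := fun d a => offDiag X a d
  have hj (j : r) : ‖colLp p (offDiag (K j * X * (K j)ᴴ))‖
      ≤ ∑ d, (∑ b, ‖K j b d‖) * ‖toLp p (K j *ᵥ x d)‖ := by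
    rw [← (hsp j).offDiag_mul_offDiag_mul_conjTranspose]
    exact (norm_colLp_offDiag_le _).trans (norm_colLp_mul_conjTranspose_le _ _)
  have hd (d : n) : ∑ j, (∑ b, ‖K j b d‖) * ‖toLp p (K j *ᵥ x d)‖ ≤ ‖toLp p (x d)‖ := by
    refine (Real.sum_mul_le_sqrt_mul_sqrt _ _ _).trans ?_
    rw [sum_sq_sum_norm_col hsp hK d, Real.sqrt_one, one_mul]
    calc √(∑ j, ‖toLp p (K j *ᵥ x d)‖ ^ 2)
        ≤ √(‖toLp p (x d)‖ ^ 2) := Real.sqrt_le_sqrt (sum_sq_norm_toLp_mulVec_le hp2 hsp hK _)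
      _ = ‖toLp p (x d)‖ := Real.sqrt_sq (norm_nonneg _)
  calc ∑ j, ‖colLp p (offDiag (K j * X * (K j)ᴴ))‖
      ≤ ∑ j, ∑ d, (∑ b, ‖K j b d‖) * ‖toLp p (K j *ᵥ x d)‖ := Finset.sum_le_sum fun j _ => hj j
    _ = ∑ d, ∑ j, (∑ b, ‖K j b d‖) * ‖toLp p (K j *ᵥ x d)‖ := Finset.sum_comm
    _ ≤ ∑ d, ‖toLp p (x d)‖ := Finset.sum_le_sum fun d _ => hd d
    _ = ‖colLp p (offDiag X)‖ := (norm_colLp _).symm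

section Coherence

variable {p : ℝ≥0∞} [Fact (1 ≤ p)]

lemma IsDensity.isIncoherentState_diagonal_diag {n : ℕ} {ρ : Matrix (Fin n) (Fin n) ℂ}
    (hρ : IsDensity ρ) : IsIncoherentState (diagonal ρ.diag) :=
  ⟨⟨PosSemidef.diagonal fun _ => hρ.1.diag_nonneg, by rw [trace_diagonal]; exact hρ.2⟩,
    isDiag_diagonal _⟩

lemma distC_lqp_one_eq {n : ℕ} {ρ : Matrix (Fin n) (Fin n) ℂ} (hρ : IsDensity ρ) :
    distC (lqp 1 p) ρ = ‖colLp p (offDiag ρ)‖ := by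
  refine IsLeast.csInf_eq ⟨⟨_, hρ.isIncoherentState_diagonal_diag, ?_⟩, ?_⟩
  · rw [lqp_one_eq_norm_colLp]
    rfl
  · rintro _ ⟨σ, hσ, rfl⟩
    rw [lqp_one_eq_norm_colLp]
    refine norm_colLp_le_of_forall_norm_le fun a b => ?_
    rw [offDiag_apply]
    split_ifs with hab
    · simp
    · simp [hσ.2 hab]

lemma IsDensity.sum_mul_mul_conjTranspose {n m r : ℕ} {ρ : Matrix (Fin n) (Fin n) ℂ}
    (hρ : IsDensity ρ) {K : Fin r → Matrix (Fin m) (Fin n) ℂ} (hK : ∑ j, (K j)ᴴ * K j = 1) :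
    IsDensity (∑ j, K j * ρ * (K j)ᴴ) := by
  refine ⟨posSemidef_sum _ fun j _ => hρ.1.mul_mul_conjTranspose_same (K j), ?_⟩
  simp_rw [trace_sum, trace_mul_cycle (K _) ρ, ← trace_sum, ← Finset.sum_mul, hK, one_mul]
  exact hρ.2

lemma isDensity_sum_smul {n r : ℕ} {ρ : Fin r → Matrix (Fin n) (Fin n) ℂ} {w : Fin r → ℝ}
    (hρ : ∀ j, IsDensity (ρ j)) (hw : ∀ j, 0 ≤ w j) (hw1 : ∑ j, w j = 1) :
    IsDensity (∑ j, (w j : ℂ) • ρ j) := by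
  refine ⟨posSemidef_sum _ fun j _ => (hρ j).1.smul (Complex.zero_le_real.2 (hw j)), ?_⟩
  simp [trace_sum, (hρ _).2, ← Complex.ofReal_sum, hw1]

lemma isDensity_inv_trace_re_smul {n : ℕ} {A : Matrix (Fin n) (Fin n) ℂ}
    (hA : A.PosSemidef) (htr : A.trace.re ≠ 0) : IsDensity (((A.trace.re)⁻¹ : ℂ) • A) := by
  obtain ⟨hre, him⟩ := Complex.nonneg_iff.1 hA.trace_nonneg
  have htr' : A.trace = (A.trace.re : ℂ) := Complex.ext (by simp) (by simp [← him])
  refine ⟨hA.smul ?_, ?_⟩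
  · rw [← Complex.ofReal_inv]
    exact Complex.zero_le_real.2 (by simpa using hre)
  · rw [trace_smul, smul_eq_mul, htr', Complex.ofReal_re]
    exact inv_mul_cancel₀ (by exact_mod_cast htr)

lemma norm_colLp_offDiag_real_smul {n : Type*} [Fintype n] [DecidableEq n] {c : ℝ} (hc : 0 ≤ c)
    (A : Matrix n n ℂ) : ‖colLp p (offDiag ((c : ℂ) • A))‖ = c * ‖colLp p (offDiag A)‖ := by
  rw [map_smul, map_smul, norm_smul, Complex.norm_real, Real.norm_of_nonneg hc]

lemma trace_re_mul_distC_inv_trace_re_smul_le {n : ℕ} {A : Matrix (Fin n) (Fin n) ℂ}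
    (hA : A.PosSemidef) :
    A.trace.re * distC (lqp 1 p) (((A.trace.re)⁻¹ : ℂ) • A) ≤ ‖colLp p (offDiag A)‖ := by
  rcases eq_or_ne A.trace.re 0 with h | h
  · rw [h, zero_mul]
    exact norm_nonneg _
  · rw [distC_lqp_one_eq (isDensity_inv_trace_re_smul hA h), ← Complex.ofReal_inv,
      norm_colLp_offDiag_real_smul (inv_nonneg.2 ?_), ← mul_assoc, mul_inv_cancel₀ h, one_mul]
    simpa using (Complex.nonneg_iff.1 hA.trace_nonneg).1

end Coherence

/-- for every `p ∈ [1,2]`, the family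
`C_{1,p}(ρ) = min{ℓ_{1,p}(ρ - σ) : σ ∈ I_n}` satisfies (B1), (B2), (B3), (B4),
i.e. it is a coherence measure. -/
theorem C_one_p_is_coherence_measure (p : ℝ≥0∞) (hp1 : 1 ≤ p) (hp2 : p ≤ 2) :
    CondB1 (fun n ρ => distC (lqp 1 p) ρ) ∧ CondB2 (fun n ρ => distC (lqp 1 p) ρ) ∧
      CondB3 (fun n ρ => distC (lqp 1 p) ρ) ∧ CondB4 (fun n ρ => distC (lqp 1 p) ρ) := by
  have : Fact (1 ≤ p) := ⟨hp1⟩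
  refine ⟨fun n ρ hρ => ?_, fun n m r K hK ρ hρ => ?_, fun n m r K hK ρ hρ => ?_,
    fun n r ρ w hρ hw hw1 => ?_⟩ <;> dsimp only
  · rw [distC_lqp_one_eq hρ, norm_colLp_eq_zero_iff, offDiag_eq_zero_iff]
    exact ⟨norm_nonneg _, fun h => ⟨hρ, h⟩, And.right⟩
  · rw [distC_lqp_one_eq (hρ.sum_mul_mul_conjTranspose hK.1), distC_lqp_one_eq hρ, map_sum,
      map_sum]
    exact (norm_sum_le _ _).trans (sum_norm_colLp_offDiag_mul_mul_conjTranspose_le hp2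
      hK.atMostOneNonzeroPerColumn hK.1 ρ)
  · rw [distC_lqp_one_eq hρ]
    exact (Finset.sum_le_sum fun j _ => trace_re_mul_distC_inv_trace_re_smul_le
      (hρ.1.mul_mul_conjTranspose_same (K j))).trans
      (sum_norm_colLp_offDiag_mul_mul_conjTranspose_le hp2 hK.atMostOneNonzeroPerColumn hK.1 ρ)
  · rw [distC_lqp_one_eq (isDensity_sum_smul hρ hw hw1), map_sum, map_sum]
    refine (norm_sum_le _ _).trans (Finset.sum_le_sum fun j _ => le_of_eq ?_)
    rw [distC_lqp_one_eq (hρ j), norm_colLp_offDiag_real_smul (hw j)]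
end
end

section
/- Let p ∈ [1,∞] and q ∈ [1,∞]. If the family C_{q,p}(ρ) = min{ℓ_{q,p}(ρ − σ) : σ ∈ I_n} satisfies condition (C3), then q = 1. In particular, for the state A = (1/4)(J_2 ⊕ J_2) ∈ D_4, where J_2 is the 2×2 all-ones matrix, one has C_{q,p}(A) = 4^{1/q}/4, while (1/2)C_{q,p}((1/2)J_2) + (1/2)C_{q,p}((1/2)J_2) = 2^{1/q}/2, and these are equal only when q = 1. -/
open scoped ENNReal ComplexOrder
open Matrix

noncomputable section

/-- The `n × n` all-ones matrix `J_n`. -/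
def Jmat (n : ℕ) : Matrix (Fin n) (Fin n) ℂ := Matrix.of fun _ _ => 1

/-! For every `ℓ_{q,p}` norm the closest incoherent state to `ρ` is its diagonal part `Δ ρ`
(whenever `Δ ρ` is a state): subtracting a diagonal `σ` leaves the off-diagonal entries
untouched, so the entrywise moduli of `ρ - σ` dominate those of `ρ - Δ ρ`.  Both `J₂ / 2` and
`(J₂ ⊕ J₂) / 4` have constant diagonal and exactly one nonzero off-diagonal entry, of modulus
`c = 1 / n`, in each column, so `C_{q,p} = n ^ (1/q) * c`.  This gives `4 ^ (1/q) / 4` and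
`2 ^ (1/q) / 2`, which agree only if `2 ^ (1/q) = 2`. -/

section LpNorm

variable {n : ℕ}

lemma lpV_nonneg (p : ℝ≥0∞) (v : Fin n → ℂ) : 0 ≤ lpV p v := by
  unfold lpV
  split
  · exact Real.iSup_nonneg fun _ => norm_nonneg _
  · exact Real.rpow_nonneg (Finset.sum_nonneg fun _ _ => by positivity) _

lemma lpV_mono (p : ℝ≥0∞) {v w : Fin n → ℂ} (h : ∀ i, ‖v i‖ ≤ ‖w i‖) :
    lpV p v ≤ lpV p w := by
  unfold lpV
  split
  · exact ciSup_mono (Set.finite_range _).bddAbove h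
  · gcongr with i
    exact h i

lemma lpV_eq_norm_of_eq_zero {p : ℝ≥0∞} (hp : p ≠ 0) {v : Fin n → ℂ} {i₀ : Fin n}
    (hv : ∀ i, i ≠ i₀ → v i = 0) : lpV p v = ‖v i₀‖ := by
  unfold lpV
  split
  · have : Nonempty (Fin n) := ⟨i₀⟩
    refine le_antisymm (ciSup_le fun i => ?_)
      (le_ciSup (f := fun i => ‖v i‖) (Set.finite_range _).bddAbove i₀)
    by_cases hi : i = i₀
    · rw [hi]
    · simp [hv i hi]
  · rename_i hp_top
    have ht : p.toReal ≠ 0 := (ENNReal.toReal_pos hp hp_top).ne'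
    rw [Finset.sum_eq_single i₀ (fun i _ hi => by simp [hv i hi, ht]) (by simp), one_div,
      Real.rpow_rpow_inv (norm_nonneg _) ht]

lemma lpV_const [NeZero n] {q : ℝ≥0∞} (hq : q ≠ 0) {c : ℝ} (hc : 0 ≤ c) :
    lpV q (fun _ : Fin n => (c : ℂ)) = (n : ℝ) ^ (1 / q.toReal) * c := by
  unfold lpV
  split
  · simp [*, Complex.norm_real, abs_of_nonneg hc]
  · rename_i hq_top
    have ht : q.toReal ≠ 0 := (ENNReal.toReal_pos hq hq_top).ne'
    rw [Finset.sum_const, Finset.card_univ, Fintype.card_fin, nsmul_eq_mul, Complex.norm_real,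
      Real.norm_of_nonneg hc, Real.mul_rpow (by positivity) (by positivity), one_div,
      Real.rpow_rpow_inv hc ht]

lemma lqp_mono (q p : ℝ≥0∞) {m : ℕ} {A B : Matrix (Fin m) (Fin n) ℂ}
    (h : ∀ i j, ‖A i j‖ ≤ ‖B i j‖) : lqp q p A ≤ lqp q p B := by
  refine lpV_mono q fun j => ?_
  rw [Complex.norm_real, Complex.norm_real, Real.norm_of_nonneg (lpV_nonneg p _),
    Real.norm_of_nonneg (lpV_nonneg p _)]
  exact lpV_mono p fun i => h i j

lemma lqp_eq_of_one_nonzero_per_column [NeZero n] {q p : ℝ≥0∞} (hq : q ≠ 0) (hp : p ≠ 0)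
    {A : Matrix (Fin n) (Fin n) ℂ} (f : Fin n → Fin n) {c : ℝ} (hc : 0 ≤ c)
    (hA : ∀ i j, i ≠ f j → A i j = 0) (hAf : ∀ j, ‖A (f j) j‖ = c) :
    lqp q p A = (n : ℝ) ^ (1 / q.toReal) * c := by
  have hcol : ∀ j, lpV p (fun i => A i j) = c := fun j => by
    rw [lpV_eq_norm_of_eq_zero hp fun i hi => hA i j hi, hAf j]
  simp only [lqp, hcol]
  exact lpV_const hq hc

end LpNorm

section Coherence

variable {n : ℕ}

lemma distC_lqp_eq_sub_diagonal_diag (q p : ℝ≥0∞) {ρ : Matrix (Fin n) (Fin n) ℂ}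
    (hρ : IsIncoherentState (diagonal ρ.diag)) :
    distC (lqp q p) ρ = lqp q p (ρ - diagonal ρ.diag) := by
  refine IsLeast.csInf_eq ⟨⟨_, hρ, rfl⟩, ?_⟩
  rintro _ ⟨σ, ⟨-, hσ⟩, rfl⟩
  refine lqp_mono q p fun i j => ?_
  by_cases hij : i = j
  · simp [hij]
  · simp [diagonal_apply_ne _ hij, hσ hij]

lemma isIncoherentState_diagonal_inv_natCast [NeZero n] :
    IsIncoherentState (diagonal fun _ : Fin n => (n : ℂ)⁻¹) := by
  refine ⟨⟨posSemidef_diagonal_iff.mpr fun _ => ?_, ?_⟩, isDiag_diagonal _⟩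
  · positivity
  · simp [trace_diagonal, NeZero.ne n]

lemma isDensity_inv_natCast_smul_Jmat [NeZero n] : IsDensity ((n : ℂ)⁻¹ • Jmat n) := by
  have hJ : Jmat n = vecMulVec 1 (star 1) := by ext; simp [Jmat, vecMulVec]
  refine ⟨?_, ?_⟩
  · rw [hJ]
    exact (posSemidef_vecMulVec_self_star 1).smul (by positivity)
  · simp [trace, Jmat, NeZero.ne n]

end Coherence

lemma dirSum_smul {n₁ n₂ : ℕ} (a : ℂ) (A : Matrix (Fin n₁) (Fin n₁) ℂ)
    (B : Matrix (Fin n₂) (Fin n₂) ℂ) : dirSum (a • A) (a • B) = a • dirSum A B := by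
  change _ = (a • fromBlocks A 0 0 B).submatrix _ _
  rw [fromBlocks_smul, smul_zero, smul_zero]
  rfl

lemma dirSum_Jmat_two : dirSum (Jmat 2) (Jmat 2) =
    !![1, 1, 0, 0; 1, 1, 0, 0; 0, 0, 1, 1; 0, 0, 1, 1] := by
  ext i j
  fin_cases i <;> fin_cases j <;> rfl

section Examples

variable {q p : ℝ≥0∞}

lemma distC_lqp_inv_two_smul_Jmat (hq : q ≠ 0) (hp : p ≠ 0) :
    distC (lqp q p) ((2 : ℂ)⁻¹ • Jmat 2) = (2 : ℝ) ^ (1 / q.toReal) / 2 := by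
  have hdiag : ((2 : ℂ)⁻¹ • Jmat 2).diag = fun _ => ((2 : ℕ) : ℂ)⁻¹ := by
    ext; simp [Jmat]
  rw [distC_lqp_eq_sub_diagonal_diag q p (hdiag ▸ isIncoherentState_diagonal_inv_natCast),
    hdiag, lqp_eq_of_one_nonzero_per_column hq hp (fun j => j + 1) (c := 1 / 2) (by norm_num)]
  · push_cast; ring
  · intro i j hij
    fin_cases i <;> fin_cases j <;> simp_all [Jmat]
  · intro j
    fin_cases j <;> simp [Jmat]

lemma distC_lqp_inv_four_smul_dirSum_Jmat (hq : q ≠ 0) (hp : p ≠ 0) :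
    distC (lqp q p) ((4 : ℂ)⁻¹ • dirSum (Jmat 2) (Jmat 2)) =
      (4 : ℝ) ^ (1 / q.toReal) / 4 := by
  have hdiag :
      ((4 : ℂ)⁻¹ • dirSum (Jmat 2) (Jmat 2)).diag = fun _ => ((4 : ℕ) : ℂ)⁻¹ := by
    ext i; fin_cases i <;> simp [dirSum_Jmat_two]
  rw [distC_lqp_eq_sub_diagonal_diag q p (hdiag ▸ isIncoherentState_diagonal_inv_natCast),
    hdiag, lqp_eq_of_one_nonzero_per_column hq hp ![1, 0, 3, 2] (c := 1 / 4) (by norm_num)]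
  · push_cast; ring
  · intro i j hij
    fin_cases i <;> fin_cases j <;> simp_all [dirSum_Jmat_two]
  · intro j
    fin_cases j <;> simp [dirSum_Jmat_two]

end Examples

lemma eq_one_of_four_rpow_div_four_eq_two_rpow_div_two {q : ℝ≥0∞}
    (h : (4 : ℝ) ^ (1 / q.toReal) / 4 = (2 : ℝ) ^ (1 / q.toReal) / 2) : q = 1 := by
  set s := 1 / q.toReal
  have hsq : (2 : ℝ) ^ s * 2 ^ s / 4 = 2 ^ s / 2 := by
    rwa [← Real.mul_rpow zero_le_two zero_le_two, two_mul, two_add_two_eq_four]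
  have htwo : (2 : ℝ) ^ s = 2 ^ (1 : ℝ) := by
    have := Real.rpow_pos_of_pos two_pos s
    rw [Real.rpow_one]
    nlinarith
  have hs : s = 1 := (Real.rpow_right_inj two_pos (by norm_num)).mp htwo
  rwa [← ENNReal.toReal_eq_one_iff, ← inv_eq_one, ← one_div]

/-- if `C_{q,p}` satisfies (C3) then `q = 1`.  In particular, for
`A = (1/4)(J₂ ⊕ J₂) ∈ D₄` one has `C_{q,p}(A) = 4^{1/q}/4`, while
`(1/2)C_{q,p}(J₂/2) + (1/2)C_{q,p}(J₂/2) = 2^{1/q}/2`, and these agree only when `q = 1`. -/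
theorem condC3_implies_q_eq_one (q p : ℝ≥0∞) (hq : 1 ≤ q) (hp : 1 ≤ p) :
    (CondC3 (fun n ρ => distC (lqp q p) ρ) → q = 1) ∧
    distC (lqp q p) (((4 : ℂ))⁻¹ • dirSum (Jmat 2) (Jmat 2))
      = (4 : ℝ) ^ (1 / q.toReal) / 4 ∧
    (1 / 2) * distC (lqp q p) (((2 : ℂ))⁻¹ • Jmat 2)
        + (1 / 2) * distC (lqp q p) (((2 : ℂ))⁻¹ • Jmat 2)
      = (2 : ℝ) ^ (1 / q.toReal) / 2 ∧
    ((4 : ℝ) ^ (1 / q.toReal) / 4 = (2 : ℝ) ^ (1 / q.toReal) / 2 → q = 1) := by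
  have hq₀ : q ≠ 0 := (zero_lt_one.trans_le hq).ne'
  have hp₀ : p ≠ 0 := (zero_lt_one.trans_le hp).ne'
  have hD4 := distC_lqp_inv_four_smul_dirSum_Jmat hq₀ hp₀
  have hD2 := distC_lqp_inv_two_smul_Jmat hq₀ hp₀
  have hsum : (1 / 2) * distC (lqp q p) ((2 : ℂ)⁻¹ • Jmat 2)
      + (1 / 2) * distC (lqp q p) ((2 : ℂ)⁻¹ • Jmat 2) = (2 : ℝ) ^ (1 / q.toReal) / 2 := by
    rw [hD2]; ring
  refine ⟨fun hC3 => ?_, hD4, hsum, eq_one_of_four_rpow_div_four_eq_two_rpow_div_two⟩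
  have hρ : IsDensity ((2 : ℂ)⁻¹ • Jmat 2) := by
    exact_mod_cast isDensity_inv_natCast_smul_Jmat
  have hadd := hC3 2 2 _ _ (1 / 2) (1 / 2) hρ hρ (by norm_num) (by norm_num) (by norm_num)
  have hmix : ((1 / 2 : ℝ) : ℂ) • (2 : ℂ)⁻¹ • Jmat 2 = (4 : ℂ)⁻¹ • Jmat 2 := by
    rw [smul_smul]; norm_num
  rw [hmix, dirSum_smul] at hadd
  exact eq_one_of_four_rpow_div_four_eq_two_rpow_div_two (by rw [← hD4, ← hsum]; exact hadd)
end
end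

section
/- Let ‖·‖ be a norm on M_n(ℂ) such that ‖P† A P‖ = ‖A‖ for every trace-zero Hermitian matrix A ∈ M_n(ℂ) and every permutation matrix P ∈ M_n(ℂ), and define C(ρ) = min{‖ρ − σ‖ : σ ∈ I_n}. Let n = n_1 + ⋯ + n_k, let R_ℓ = E_{12} + E_{23} + ⋯ + E_{ℓ,1} ∈ M_ℓ(ℂ) be the basic circulant permutation matrix, and let R = R_{n_1} ⊕ ⋯ ⊕ R_{n_k}. Suppose ρ = ρ_1 ⊕ ⋯ ⊕ ρ_k ∈ D_n (with ρ_j ∈ M_{n_j}(ℂ)) satisfies R† ρ R = ρ. Then there exist s_1,…,s_k ∈ ℝ such that C(ρ) = ‖(ρ_1 − s_1 I_{n_1}) ⊕ ⋯ ⊕ (ρ_k − s_k I_{n_k})‖; moreover the s_i can be chosen so that s_p = s_q whenever ρ_p = ρ_q (and n_p = n_q); in particular, if ρ_1 = ⋯ = ρ_k then C(ρ) = ‖ρ − ρ_diag‖. -/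
/-!
Incoherent states are the matrices `diagonal w` with `w` in the standard simplex, and
`w ↦ ν (ρ - diagonal w)` is convex, hence continuous, so it attains its minimum on the simplex.
Averaging a minimiser `w` over the group of permutations `g` with `ρ.submatrix g g = ρ` keeps it a
minimiser: `ρ - diagonal w` is Hermitian of trace zero, so all its permuted copies have the same
norm, and `ρ - diagonal (average of w)` is their average. The averaged weight is invariant under
that group, which contains the cyclic shift inside every block (this is `R† ρ R = ρ`) and the
exchange of any two equal blocks. So it is constant on each block, with the same constant on equal
blocks; if all blocks are equal it is constant, and having mass one it is the diagonal of `ρ`.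
-/

open scoped ENNReal ComplexOrder
open Matrix

noncomputable section

/-- A density matrix (general finite index type). -/
def IsDensityG {ι : Type*} [Fintype ι] (ρ : Matrix ι ι ℂ) : Prop :=
  ρ.PosSemidef ∧ ρ.trace = 1

/-- An incoherent (diagonal) density matrix. -/
def IsIncoherentStateG {ι : Type*} [Fintype ι] (ρ : Matrix ι ι ℂ) : Prop :=
  IsDensityG ρ ∧ ρ.IsDiag

/-- `C(ρ) = min{ν(ρ - σ) : σ ∈ I_n}` (as an infimum). -/
def distCG {ι : Type*} [Fintype ι] (ν : Matrix ι ι ℂ → ℝ) (ρ : Matrix ι ι ℂ) : ℝ :=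
  sInf {x | ∃ σ, IsIncoherentStateG σ ∧ x = ν (ρ - σ)}

/-- A norm on matrices (nonnegativity is automatic). -/
def IsMatrixNormG {ι : Type*} (ν : Matrix ι ι ℂ → ℝ) : Prop :=
  (∀ A, ν A = 0 ↔ A = 0) ∧ (∀ (c : ℂ) A, ν (c • A) = ‖c‖ * ν A) ∧
  (∀ A B, ν (A + B) ≤ ν A + ν B)

/-- The basic circulant permutation matrix `R_ℓ = E_{12} + E_{23} + ⋯ + E_{ℓ,1} ∈ M_ℓ(ℂ)`. -/
def basicCirculant (ℓ : ℕ) : Matrix (Fin ℓ) (Fin ℓ) ℂ :=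
  Matrix.of fun i j => if (j : ℕ) = ((i : ℕ)  + 1) % ℓ then 1 else 0

open Equiv Finset

namespace IsMatrixNormG

variable {ι : Type*} {ν : Matrix ι ι ℂ → ℝ}

def toSeminorm (hν : IsMatrixNormG ν) : Seminorm ℂ (Matrix ι ι ℂ) :=
  Seminorm.of ν hν.2.2 hν.2.1

theorem inv_card_smul_sum_le (hν : IsMatrixNormG ν) {β : Type*} [Fintype β] [Nonempty β]
    {A : β → Matrix ι ι ℂ} {c : ℝ} (hA : ∀ b, ν (A b) ≤ c) :
    ν ((Fintype.card β : ℂ)⁻¹ • ∑ b, A b) ≤ c := by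
  have hcard : (0 : ℝ) < Fintype.card β := by exact_mod_cast Fintype.card_pos
  calc ν ((Fintype.card β : ℂ)⁻¹ • ∑ b, A b)
      = (Fintype.card β : ℝ)⁻¹ * ν (∑ b, A b) := by
        rw [hν.2.1, norm_inv, Complex.norm_natCast]
    _ ≤ (Fintype.card β : ℝ)⁻¹ * ∑ b, ν (A b) := by
        gcongr; exact le_sum_of_subadditive ν ((hν.1 0).mpr rfl).le hν.2.2 univ A
    _ ≤ (Fintype.card β : ℝ)⁻¹ * (Fintype.card β * c) := by
        gcongr; simpa using sum_le_card_nsmul univ _ c fun b _ => hA b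
    _ = c := by field_simp

end IsMatrixNormG

section Diagonal

variable {ι : Type*} [DecidableEq ι] {ν : Matrix ι ι ℂ → ℝ} {ρ : Matrix ι ι ℂ}

variable (ν ρ) in
def distToDiagonal (w : ι → ℝ) : ℝ :=
  ν (ρ - diagonal fun i => (w i : ℂ))

theorem convexOn_distToDiagonal (hν : IsMatrixNormG ν) :
    ConvexOn ℝ Set.univ (distToDiagonal ν ρ) := by
  refine ⟨convex_univ, fun v _ w _ a b ha hb hab => ?_⟩
  have hdiag : diagonal (fun i => ((a • v + b • w) i : ℂ)) =
      a • diagonal (fun i => (v i : ℂ)) + b • diagonal fun i => (w i : ℂ) := by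
    rw [← diagonal_smul, ← diagonal_smul, diagonal_add]
    congr 1
    ext i
    simp [Complex.real_smul]
  have hsplit : ρ - diagonal (fun i => ((a • v + b • w) i : ℂ)) =
      a • (ρ - diagonal fun i => (v i : ℂ)) + b • (ρ - diagonal fun i => (w i : ℂ)) := by
    rw [hdiag]
    linear_combination (norm := module) -hab • ρ
  rw [distToDiagonal, hsplit]
  exact hν.toSeminorm.convexOn.2 trivial trivial ha hb hab

variable [Fintype ι]

theorem isIncoherentStateG_iff {σ : Matrix ι ι ℂ} :
    IsIncoherentStateG σ ↔ ∃ w ∈ stdSimplex ℝ ι, σ = diagonal fun i => (w i : ℂ) := by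
  constructor
  · rintro ⟨⟨hpos, htr⟩, hdiag⟩
    refine ⟨fun i => (σ i i).re, ⟨fun i => ?_, ?_⟩, ?_⟩
    · exact (Complex.nonneg_iff.mp hpos.diag_nonneg).1
    · simpa [trace, Complex.re_sum] using congrArg Complex.re htr
    · ext i j
      rcases eq_or_ne i j with rfl | hij
      · simpa using (hpos.1.coe_re_apply_self i).symm
      · simp [hdiag hij, hij]
  · rintro ⟨w, ⟨hw0, hw1⟩, rfl⟩
    refine ⟨⟨posSemidef_diagonal_iff.mpr fun i => ?_, ?_⟩, isDiag_diagonal _⟩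
    · exact_mod_cast hw0 i
    · simp [trace_diagonal, ← Complex.ofReal_sum, hw1]

theorem distCG_eq_of_isMinOn {w : ι → ℝ} (hw : w ∈ stdSimplex ℝ ι)
    (hmin : IsMinOn (distToDiagonal ν ρ) (stdSimplex ℝ ι) w) :
    distCG ν ρ = distToDiagonal ν ρ w := by
  refine IsLeast.csInf_eq ⟨⟨_, isIncoherentStateG_iff.mpr ⟨w, hw, rfl⟩, rfl⟩, ?_⟩
  rintro _ ⟨σ, hσ, rfl⟩
  obtain ⟨t, ht, rfl⟩ := isIncoherentStateG_iff.mp hσ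
  exact hmin ht

theorem exists_isMinOn_distToDiagonal [Nonempty ι] (hν : IsMatrixNormG ν) :
    ∃ w ∈ stdSimplex ℝ ι, IsMinOn (distToDiagonal ν ρ) (stdSimplex ℝ ι) w :=
  (isCompact_stdSimplex ℝ ι).exists_isMinOn ⟨_, single_mem_stdSimplex ℝ (Classical.arbitrary ι)⟩
    (((convexOn_distToDiagonal hν).continuousOn isOpen_univ).mono (Set.subset_univ _))

end Diagonal

def Matrix.permStabilizer {ι α : Type*} (A : Matrix ι ι α) : Subgroup (Perm ι) where
  carrier := {e | A.submatrix e e = A}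
  one_mem' := submatrix_id_id A
  mul_mem' {e f} (he : A.submatrix e e = A) (hf : A.submatrix f f = A) :=
    show A.submatrix (e * f) (e * f) = A by rw [Perm.coe_mul, ← submatrix_submatrix, he, hf]
  inv_mem' {e} (he : A.submatrix e e = A) :=
    show A.submatrix ⇑e⁻¹ ⇑e⁻¹ = A by conv_lhs => rw [← he]; simp [submatrix_submatrix]

section Average

variable {ι : Type*} (G : Subgroup (Perm ι)) [Fintype G]

def permAverage (w : ι → ℝ) (x : ι) : ℝ :=
  (Fintype.card G : ℝ)⁻¹ * ∑ g : G, w ((g : Perm ι) x)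

variable {G}

theorem permAverage_comp_of_mem (w : ι → ℝ) {g : Perm ι} (hg : g ∈ G) :
    permAverage G w ∘ g = permAverage G w := by
  ext x
  simp only [Function.comp_apply, permAverage]
  congr 1
  exact Fintype.sum_equiv (Equiv.mulRight ⟨g, hg⟩) _ _ fun h => rfl

theorem permAverage_mem_stdSimplex [Fintype ι] {w : ι → ℝ} (hw : w ∈ stdSimplex ℝ ι) :
    permAverage G w ∈ stdSimplex ℝ ι := by
  refine ⟨fun x => mul_nonneg (by positivity) (sum_nonneg fun g _ => hw.1 _), ?_⟩
  have hcard : (Fintype.card G : ℝ) ≠ 0 := by exact_mod_cast Fintype.card_ne_zero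
  simp only [permAverage, ← mul_sum]
  rw [sum_comm]
  simp [Equiv.sum_comp, hw.2, hcard]

theorem sub_diagonal_permAverage [DecidableEq ι] {ρ : Matrix ι ι ℂ} (hG : G ≤ ρ.permStabilizer)
    (w : ι → ℝ) :
    ρ - diagonal (fun x => (permAverage G w x : ℂ)) =
      (Fintype.card G : ℂ)⁻¹ • ∑ g : G, (ρ - diagonal fun x => (w x : ℂ)).submatrix g g := by
  have hcard : (Fintype.card G : ℂ) ≠ 0 := by exact_mod_cast Fintype.card_ne_zero
  ext x y
  have hρ : ∀ g : G, ρ ((g : Perm ι) x) ((g : Perm ι) y) = ρ x y := fun g =>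
    congrFun (congrFun (hG g.2) x) y
  rcases eq_or_ne x y with rfl | hxy
  · simp [permAverage, Matrix.sum_apply, hρ, mul_sub, hcard]
  · simp [Matrix.sum_apply, hρ, hxy, hcard]

end Average

theorem IsDensityG.nonempty {ι : Type*} [Fintype ι] {ρ : Matrix ι ι ℂ} (hρ : IsDensityG ρ) :
    Nonempty ι := by
  by_contra h
  simpa [not_nonempty_iff.mp h, trace] using hρ.2

theorem exists_invariant_isMinOn_distToDiagonal {ι : Type*} [Fintype ι] [DecidableEq ι]
    {ν : Matrix ι ι ℂ → ℝ} {ρ : Matrix ι ι ℂ} (hν : IsMatrixNormG ν)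
    (hperm : ∀ A : Matrix ι ι ℂ, A.IsHermitian → A.trace = 0 →
      ∀ e : Perm ι, ν (A.submatrix e e) = ν A)
    (hρ : IsDensityG ρ) :
    ∃ w ∈ stdSimplex ℝ ι, IsMinOn (distToDiagonal ν ρ) (stdSimplex ℝ ι) w ∧
      ∀ g ∈ ρ.permStabilizer, w ∘ g = w := by
  classical
  have := hρ.nonempty
  obtain ⟨w, hw, hmin⟩ := exists_isMinOn_distToDiagonal (ρ := ρ) hν
  refine ⟨permAverage ρ.permStabilizer w, permAverage_mem_stdSimplex hw,
    isMinOn_iff.mpr fun t ht => ?_, fun g hg => permAverage_comp_of_mem w hg⟩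
  refine le_trans ?_ (isMinOn_iff.mp hmin t ht)
  obtain ⟨⟨hσ, hσtr⟩, -⟩ := isIncoherentStateG_iff.mpr ⟨w, hw, rfl⟩
  have hA := hρ.1.1.sub hσ.1
  have htr : (ρ - diagonal fun x => (w x : ℂ)).trace = 0 := by
    rw [trace_sub, hρ.2, hσtr, sub_self]
  rw [distToDiagonal, sub_diagonal_permAverage le_rfl]
  exact hν.inv_card_smul_sum_le fun g => (hperm _ hA htr g).le

theorem conjTranspose_permMatrix_mul_mul_permMatrix {n R : Type*} [Fintype n] [DecidableEq n]
    [NonAssocSemiring R] [StarRing R] (e : Perm n) (A : Matrix n n R) :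
    (e.permMatrix R)ᴴ * A * e.permMatrix R = A.submatrix ⇑e⁻¹ ⇑e⁻¹ := by
  rw [conjTranspose_permMatrix, PEquiv.toMatrix_toPEquiv_mul, PEquiv.mul_toMatrix_toPEquiv,
    submatrix_submatrix]
  rfl

theorem blockDiagonal'_permMatrix {o R : Type*} {β : o → Type*} [DecidableEq o]
    [∀ i, DecidableEq (β i)] [Zero R] [One R] (e : ∀ i, Perm (β i)) :
    blockDiagonal' (fun i => (e i).permMatrix R) = (Perm.sigmaCongrRight e).permMatrix R := by
  ext ⟨i, a⟩ ⟨j, b⟩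
  rcases eq_or_ne i j with rfl | hij
  · simp [PEquiv.toMatrix_apply, blockDiagonal'_apply_eq, eq_comm]
  · have hne : (⟨j, b⟩ : Σ i, β i) ≠ ⟨i, e i a⟩ := fun h => hij (congrArg Sigma.fst h).symm
    rw [blockDiagonal'_apply_ne _ _ _ hij, Perm.permMatrix, PEquiv.toMatrix_apply, if_neg]
    exact fun h => hne (Option.mem_some_iff.mp h).symm

theorem basicCirculant_eq_permMatrix (ℓ : ℕ) : basicCirculant ℓ = (finRotate ℓ).permMatrix ℂ := by
  ext i j
  simp [basicCirculant, PEquiv.toMatrix_apply, finRotate_apply, Fin.ext_iff, Fin.val_add, eq_comm]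

theorem Fin.apply_eq_apply_of_comp_finRotate {m : ℕ} {γ : Type*} {v : Fin m → γ}
    (hv : v ∘ finRotate m = v) (i i' : Fin m) : v i = v i' := by
  cases m with
  | zero => exact i.elim0
  | succ n =>
    suffices h0 : ∀ i, v i = v 0 by rw [h0 i, h0 i']
    intro i
    induction i using Fin.induction with
    | zero => rfl
    | succ i ih => rw [← ih, ← congrFun hv i.castSucc, Function.comp_apply, finRotate_apply,
        Fin.coeSucc_eq_succ]

theorem heq_apply_swap {α : Type*} [DecidableEq α] {β : α → Sort*} (f : ∀ a, β a) {a b : α}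
    (hab : HEq (f a) (f b)) (c : α) : HEq (f (swap a b c)) (f c) := by
  rcases eq_or_ne c a with rfl | hca
  · rw [swap_apply_left]; exact hab.symm
  rcases eq_or_ne c b with rfl | hcb
  · rw [swap_apply_right]; exact hab
  · rw [swap_apply_of_ne_of_ne hca hcb]

theorem Matrix.apply_cast_eq_of_heq {α : Type*} {m n : ℕ} (h : m = n)
    {A : Matrix (Fin m) (Fin m) α} {B : Matrix (Fin n) (Fin n) α} (hAB : HEq A B) (i i' : Fin n) :
    A (Fin.cast h.symm i) (Fin.cast h.symm i') = B i i' := by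
  subst h; cases hAB; rfl

section Blocks

variable {k : ℕ} {nn : Fin k → ℕ}

variable (nn) in
def blockRotation : Perm ((j : Fin k) × Fin (nn j)) :=
  Perm.sigmaCongrRight fun j => finRotate (nn j)

def blockPerm (π : Perm (Fin k)) (h : ∀ j, nn (π j) = nn j) : Perm ((j : Fin k) × Fin (nn j)) :=
  Equiv.sigmaCongr π fun j => finCongr (h j).symm

theorem blockPerm_apply (π : Perm (Fin k)) (h : ∀ j, nn (π j) = nn j) (j : Fin k)
    (i : Fin (nn j)) :
    blockPerm π h ⟨j, i⟩ = ⟨π j, Fin.cast (h j).symm i⟩ :=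
  rfl

def blockMean (w : (j : Fin k) × Fin (nn j) → ℝ) (j : Fin k) : ℝ :=
  (∑ i, w ⟨j, i⟩) / nn j

theorem blockRotation_mem_permStabilizer
    {A : Matrix ((j : Fin k) × Fin (nn j)) ((j : Fin k) × Fin (nn j)) ℂ}
    (hA : (blockDiagonal' fun j => basicCirculant (nn j))ᴴ * A *
      (blockDiagonal' fun j => basicCirculant (nn j)) = A) :
    blockRotation nn ∈ A.permStabilizer := by
  simp only [basicCirculant_eq_permMatrix, blockDiagonal'_permMatrix,
    conjTranspose_permMatrix_mul_mul_permMatrix] at hA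
  exact inv_mem_iff.mp hA

theorem blockPerm_mem_permStabilizer {α : Type*} [Zero α] {π : Perm (Fin k)}
    {h : ∀ j, nn (π j) = nn j} {M : ∀ j, Matrix (Fin (nn j)) (Fin (nn j)) α}
    (hM : ∀ j, HEq (M (π j)) (M j)) : blockPerm π h ∈ (blockDiagonal' M).permStabilizer := by
  show (blockDiagonal' M).submatrix _ _ = _
  ext ⟨j, i⟩ ⟨j', i'⟩
  rcases eq_or_ne j j' with rfl | hj
  · simpa [blockPerm_apply, blockDiagonal'_apply_eq] using apply_cast_eq_of_heq (h j) (hM j) i i'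
  · simp [blockPerm_apply, blockDiagonal'_apply_ne _ _ _ (π.injective.ne hj),
      blockDiagonal'_apply_ne _ _ _ hj]

variable {w : (j : Fin k) × Fin (nn j) → ℝ}

theorem apply_eq_blockMean (hw : w ∘ blockRotation nn = w) (x : (j : Fin k) × Fin (nn j)) :
    w x = blockMean w x.1 := by
  obtain ⟨j, i⟩ := x
  have hconst : ∀ i', w ⟨j, i'⟩ = w ⟨j, i⟩ := fun i' =>
    Fin.apply_eq_apply_of_comp_finRotate (v := fun i => w ⟨j, i⟩)
      (funext fun i => congrFun hw ⟨j, i⟩) i' i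
  have hn : (nn j : ℝ) ≠ 0 := by exact_mod_cast (Fin.pos i).ne'
  simp [blockMean, hconst, hn]

theorem diagonal_eq_blockDiagonal'_blockMean (hw : w ∘ blockRotation nn = w) :
    diagonal (fun x => (w x : ℂ)) =
      blockDiagonal' fun j => (blockMean w j : ℂ) • (1 : Matrix (Fin (nn j)) (Fin (nn j)) ℂ) := by
  simp only [smul_one_eq_diagonal, blockDiagonal'_diagonal, ← apply_eq_blockMean hw]

theorem blockMean_apply_perm {π : Perm (Fin k)} {h : ∀ j, nn (π j) = nn j}
    (hw : w ∘ blockPerm π h = w) (j : Fin k) : blockMean w (π j) = blockMean w j := by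
  have hsum : ∑ i, w ⟨j, i⟩ = ∑ i, w ⟨π j, i⟩ :=
    Fintype.sum_equiv (finCongr (h j).symm) _ _ fun i => (congrFun hw ⟨j, i⟩).symm
  rw [blockMean, blockMean, ← hsum, h j]

variable {ρb : ∀ j, Matrix (Fin (nn j)) (Fin (nn j)) ℂ}

theorem blockMean_eq_of_heq (hw : ∀ g ∈ (blockDiagonal' ρb).permStabilizer, w ∘ g = w)
    {a b : Fin k} (hn : nn a = nn b) (hρ : HEq (ρb a) (ρb b)) :
    blockMean w a = blockMean w b := by
  have hswap := blockPerm_mem_permStabilizer (h := apply_swap_eq_self hn) (heq_apply_swap ρb hρ)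
  simpa using (blockMean_apply_perm (hw _ hswap) a).symm

theorem apply_eq_apply_of_forall_heq (hE : blockRotation nn ∈ (blockDiagonal' ρb).permStabilizer)
    (hw : ∀ g ∈ (blockDiagonal' ρb).permStabilizer, w ∘ g = w)
    (hall : ∀ a b, nn a = nn b ∧ HEq (ρb a) (ρb b)) (x y : (j : Fin k) × Fin (nn j)) :
    w x = w y := by
  rw [apply_eq_blockMean (hw _ hE) x, apply_eq_blockMean (hw _ hE) y]
  exact blockMean_eq_of_heq hw (hall _ _).1 (hall _ _).2

end Blocks

theorem eq_of_sum_eq_of_forall_apply_eq {ι : Type*} [Fintype ι] {v w : ι → ℝ}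
    (hv : ∀ x y, v x = v y) (hw : ∀ x y, w x = w y) (hsum : ∑ x, v x = ∑ x, w x) : v = w := by
  funext x
  have hcard : (Fintype.card ι : ℝ) ≠ 0 := by
    have : Nonempty ι := ⟨x⟩
    exact_mod_cast Fintype.card_ne_zero
  have hconst : ∀ u : ι → ℝ, (∀ y, u y = u x) → ∑ y, u y = Fintype.card ι * u x :=
    fun u hu => by simp [hu]
  rw [hconst v (hv · x), hconst w (hw · x)] at hsum
  exact mul_left_cancel₀ hcard hsum

/-- Proposition 2.3: let `‖·‖` be a norm on `M_n(ℂ)`, `n = n₁ + ⋯ + n_k`,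
invariant under simultaneous row/column permutations of trace-zero Hermitian matrices, let
`C(ρ) = min{‖ρ - σ‖ : σ ∈ I_n}`, and let `R = R_{n₁} ⊕ ⋯ ⊕ R_{n_k}` (basic circulants).
If `ρ = ρ₁ ⊕ ⋯ ⊕ ρ_k ∈ D_n` satisfies `R† ρ R = ρ`, then there are `s₁, …, s_k ∈ ℝ` with
`C(ρ) = ‖(ρ₁ - s₁ I_{n₁}) ⊕ ⋯ ⊕ (ρ_k - s_k I_{n_k})‖`, where moreover `s_p = s_q`
whenever `ρ_p = ρ_q`; in particular, if all the `ρ_j` coincide then `C(ρ) = ‖ρ - ρ_diag‖`. -/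
theorem distC_block_circulant_invariant
    (k : ℕ) (nn : Fin k → ℕ)
    (ν : Matrix ((j : Fin k) × Fin (nn j)) ((j : Fin k) × Fin (nn j)) ℂ → ℝ)
    (hν : IsMatrixNormG ν)
    (hperm : ∀ A : Matrix ((j : Fin k) × Fin (nn j)) ((j : Fin k) × Fin (nn j)) ℂ,
      A.IsHermitian → A.trace = 0 →
      ∀ e : Equiv.Perm ((j : Fin k) × Fin (nn j)), ν (A.submatrix e e) = ν A)
    (ρb : ∀ j : Fin k, Matrix (Fin (nn j)) (Fin (nn j)) ℂ)
    (hρ : IsDensityG (Matrix.blockDiagonal' ρb))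
    (hR : (Matrix.blockDiagonal' fun j => basicCirculant (nn j))ᴴ *
            Matrix.blockDiagonal' ρb *
            (Matrix.blockDiagonal' fun j => basicCirculant (nn j)) =
          Matrix.blockDiagonal' ρb) :
    ∃ s : Fin k → ℝ,
      distCG ν (Matrix.blockDiagonal' ρb) =
        ν (Matrix.blockDiagonal' fun j => ρb j - (s j : ℂ) • (1 : Matrix (Fin (nn j)) (Fin (nn j)) ℂ)) ∧
      (∀ a b : Fin k, nn a = nn b → HEq (ρb a) (ρb b) → s a = s b) ∧
      ((∀ a b : Fin k, nn a = nn b ∧ HEq (ρb a) (ρb b)) →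
        distCG ν (Matrix.blockDiagonal' ρb) =
          ν (Matrix.blockDiagonal' ρb -
              Matrix.diagonal fun i => Matrix.blockDiagonal' ρb i i)) := by
  set ρ := blockDiagonal' ρb
  have hE : blockRotation nn ∈ ρ.permStabilizer := blockRotation_mem_permStabilizer hR
  obtain ⟨w, hw, hmin, hwG⟩ := exists_invariant_isMinOn_distToDiagonal hν hperm hρ
  have hdist : distCG ν ρ = distToDiagonal ν ρ w := distCG_eq_of_isMinOn hw hmin
  refine ⟨blockMean w, ?_, fun a b => blockMean_eq_of_heq hwG, fun hall => ?_⟩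
  · rw [hdist, distToDiagonal, diagonal_eq_blockDiagonal'_blockMean (hwG _ hE),
      ← blockDiagonal'_sub]
    rfl
  · let v x := (ρ x x).re
    have hvG : ∀ g ∈ ρ.permStabilizer, v ∘ g = v := fun g hg =>
      funext fun x => congrArg Complex.re (congrFun (congrFun hg x) x)
    have hv : ∑ x, v x = 1 := by simpa [trace, Complex.re_sum] using congrArg Complex.re hρ.2
    have hwv : w = v := eq_of_sum_eq_of_forall_apply_eq
      (apply_eq_apply_of_forall_heq hE hwG hall) (apply_eq_apply_of_forall_heq hE hvG hall)
      (by rw [hw.2, hv])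
    rw [hdist, distToDiagonal, hwv]
    congr
    exact funext hρ.1.1.coe_re_apply_self
end
end

section
/- Fix p ∈ [1,2] and n ∈ ℕ. Let Ω be a collection of nonempty subsets of {1,…,n} whose union is {1,…,n}, and let v ∈ ℝ_+^n be a nonzero vector with nonnegative entries. For each σ ∈ Ω let b_σ ≥ 0. Suppose Σ_{σ ∈ Ω} b_σ = ℓ_2(v)^2 and, for every subset τ ⊆ {1,…,n}, Σ_{σ ∈ Ω, σ ⊆ τ} b_σ ≤ ℓ_2(v_τ)^2. Then Σ_{σ ∈ Ω, v_σ ≠ 0} ℓ_p(v_σ)^{p−2} b_σ ≤ ℓ_p(v)^p. -/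
open scoped Classical

noncomputable section

/-- `ℓ_p` norm of the subvector `v_σ` of `v` with indices in `σ` (real exponent `p`). -/
def lpOn (p : ℝ) {n : ℕ} (σ : Finset (Fin n)) (v : Fin n → ℝ) : ℝ :=
  (∑ j ∈ σ, |v j| ^ p) ^ (1 / p)

/-- Lagrange lemma: fix `p ∈ [1,2]` and `n`.  Let `Ω` be a collection of
nonempty subsets covering `{1,…,n}`, `v ∈ ℝ₊ⁿ` nonzero, and `b_σ ≥ 0` for `σ ∈ Ω` with
`∑_{σ ∈ Ω} b_σ = ℓ₂(v)²` and `∑_{σ ⊆ τ, σ ∈ Ω} b_σ ≤ ℓ₂(v_τ)²` for every `τ ⊆ {1,…,n}`.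
Then `∑_{σ ∈ Ω, v_σ ≠ 0} ℓ_p(v_σ)^{p-2} b_σ ≤ ℓ_p(v)^p`. -/
theorem lagrange_lemma (p : ℝ) (hp1 : 1 ≤ p) (hp2 : p ≤ 2) (n : ℕ)
    (Ω : Finset (Finset (Fin n))) (hne : ∀ σ ∈ Ω, σ.Nonempty)
    (hcover : ∀ i : Fin n, ∃ σ ∈ Ω, i ∈ σ)
    (v : Fin n → ℝ) (hv0 : ∀ i, 0 ≤ v i) (hv : v ≠ 0)
    (b : Finset (Fin n) → ℝ) (hb : ∀ σ ∈ Ω, 0 ≤ b σ)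
    (hsum : ∑ σ ∈ Ω, b σ = ∑ j, v j ^ 2)
    (hτ : ∀ τ : Finset (Fin n), ∑ σ ∈ Ω.filter (· ⊆ τ), b σ ≤ ∑ j ∈ τ, v j ^ 2) :
    ∑ σ ∈ Ω.filter (fun σ => ∃ j ∈ σ, v j ≠ 0), lpOn p σ v ^ (p - 2) * b σ ≤
      lpOn p Finset.univ v ^ p := by
  have hp0 : (0:ℝ) < p := by linarith
  have hp2' : p - 2 ≤ 0 := by linarith
  set s : Finset (Fin n) → ℝ := fun σ => lpOn p σ v with hs_def
  set Ω' : Finset (Finset (Fin n)) := Ω.filter (fun σ => ∃ j ∈ σ, v j ≠ 0) with hΩ'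
  -- F and G
  set F : ℝ → ℝ := fun M => ∑ j ∈ Finset.univ.filter (fun j => 0 < v j ∧ v j ≤ M), v j ^ 2
    with hF
  set G : ℝ → ℝ := fun M => ∑ j ∈ Finset.univ.filter (fun j => 0 < v j ∧ v j ≤ M), v j ^ p
    with hG
  -- pointwise key inequality
  have key : ∀ x M : ℝ, 0 < x → x ≤ M → M ^ (p-2) * x ^ 2 ≤ x ^ p := by
    intro x M hx hxM
    have h1 : M ^ (p-2) ≤ x ^ (p-2) := Real.rpow_le_rpow_of_nonpos hx hxM hp2'
    have h2 : x ^ (p-2) * x ^ 2 = x ^ p := by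
      rw [show (x:ℝ) ^ (2:ℕ) = x ^ (2:ℝ) by rw [← Real.rpow_natCast x 2]; norm_num,
        ← Real.rpow_add hx]
      ring_nf
    calc M ^ (p-2) * x ^ 2 ≤ x ^ (p-2) * x ^ 2 := by
          apply mul_le_mul_of_nonneg_right h1 (by positivity)
      _ = x ^ p := h2
  -- positivity of s on Ω'
  have hspos : ∀ σ ∈ Ω', 0 < s σ := by
    intro σ hσ
    rw [hΩ', Finset.mem_filter] at hσ
    obtain ⟨hσΩ, j, hj, hvj⟩ := hσ
    have hsum_pos : 0 < ∑ i ∈ σ, |v i| ^ p := by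
      apply Finset.sum_pos' (fun i _ => Real.rpow_nonneg (abs_nonneg _) _)
      exact ⟨j, hj, Real.rpow_pos_of_pos (abs_pos.2 hvj) _⟩
    exact Real.rpow_pos_of_pos hsum_pos _
  -- coordinates bounded by s
  have hcoord : ∀ σ, ∀ j ∈ σ, v j ≤ s σ := by
    intro σ j hj
    have h1 : |v j| = (|v j| ^ p) ^ (1/p) := by
      rw [← Real.rpow_mul (abs_nonneg _), mul_one_div_cancel (ne_of_gt hp0), Real.rpow_one]
    have h2 : (|v j| ^ p) ^ (1/p) ≤ s σ := by
      apply Real.rpow_le_rpow (Real.rpow_nonneg (abs_nonneg _) _)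
      · exact Finset.single_le_sum (fun i _ => Real.rpow_nonneg (abs_nonneg _) _) hj
      · positivity
    calc v j ≤ |v j| := le_abs_self _
      _ = (|v j| ^ p) ^ (1/p) := h1
      _ ≤ s σ := h2
  -- the constraint H
  have H : ∀ σ ∈ Ω', (∑ σ' ∈ Ω'.filter (fun σ' => s σ' ≤ s σ), b σ') ≤ F (s σ) := by
    intro σ hσ
    set τ : Finset (Fin n) := Finset.univ.filter (fun j => v j ≤ s σ) with hτdef
    have step1 : (∑ σ' ∈ Ω'.filter (fun σ' => s σ' ≤ s σ), b σ')
        ≤ ∑ σ' ∈ Ω.filter (· ⊆ τ), b σ' := by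
      apply Finset.sum_le_sum_of_subset_of_nonneg
      · intro σ' hσ'
        rw [Finset.mem_filter] at hσ' ⊢
        rw [hΩ', Finset.mem_filter] at hσ'
        refine ⟨hσ'.1.1, ?_⟩
        intro j hj
        rw [hτdef, Finset.mem_filter]
        exact ⟨Finset.mem_univ _, le_trans (hcoord σ' j hj) hσ'.2⟩
      · intro σ' h1 _
        exact hb σ' (Finset.mem_filter.1 h1).1
    have step2 : ∑ σ' ∈ Ω.filter (· ⊆ τ), b σ' ≤ ∑ j ∈ τ, v j ^ 2 := hτ τ
    have step3 : ∑ j ∈ τ, v j ^ 2 = F (s σ) := by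
      rw [hF]
      apply (Finset.sum_subset ?_ ?_).symm
      · intro j hj
        rw [Finset.mem_filter] at hj
        rw [hτdef, Finset.mem_filter]
        exact ⟨Finset.mem_univ _, hj.2.2⟩
      · intro j hj hj2
        rw [hτdef, Finset.mem_filter] at hj
        rw [Finset.mem_filter] at hj2
        push_neg at hj2
        have : v j = 0 := by
          by_contra h
          have hpos : 0 < v j := lt_of_le_of_ne (hv0 j) (Ne.symm h)
          exact absurd hj.2 (not_le.2 (hj2 (Finset.mem_univ _) hpos))
        simp [this]
    linarith
  -- F and G monotone pieces: M^(p-2) * (F M - F a) ≤ G M - G a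
  have hFG : ∀ a M : ℝ, 0 < a → a ≤ M → M ^ (p-2) * (F M - F a) ≤ G M - G a := by
    intro a M ha haM
    have hsub : Finset.univ.filter (fun j => 0 < v j ∧ v j ≤ a)
        ⊆ Finset.univ.filter (fun j => 0 < v j ∧ v j ≤ M) := by
      intro j hj
      rw [Finset.mem_filter] at hj ⊢
      exact ⟨hj.1, hj.2.1, hj.2.2.trans haM⟩
    rw [hF, hG]
    rw [← Finset.sum_sdiff_eq_sub hsub, ← Finset.sum_sdiff_eq_sub hsub, Finset.mul_sum]
    apply Finset.sum_le_sum
    intro j hj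
    rw [Finset.mem_sdiff, Finset.mem_filter] at hj
    exact key (v j) M hj.1.2.1 hj.1.2.2
  -- main induction
  have aux : ∀ (k : ℕ) (T : Finset (Finset (Fin n))), T.card ≤ k → T ⊆ Ω' →
      ∀ M : ℝ, 0 < M → (∀ σ ∈ T, s σ ≤ M) →
      (∑ σ ∈ T, s σ ^ (p-2) * b σ) + M ^ (p-2) * (F M - ∑ σ ∈ T, b σ) ≤ G M := by
    intro k
    induction k with
    | zero =>
      intro T hcard _ M hM _
      rw [Nat.le_zero, Finset.card_eq_zero] at hcard
      subst hcard
      simp only [Finset.sum_empty, zero_add, sub_zero]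
      rw [hF, hG, Finset.mul_sum]
      apply Finset.sum_le_sum
      intro j hj
      rw [Finset.mem_filter] at hj
      exact key (v j) M hj.2.1 hj.2.2
    | succ k ih =>
      intro T hcard hTsub M hM hbound
      rcases T.eq_empty_or_nonempty with rfl | hTne
      · simp only [Finset.sum_empty, zero_add, sub_zero]
        rw [hF, hG, Finset.mul_sum]
        apply Finset.sum_le_sum
        intro j hj
        rw [Finset.mem_filter] at hj
        exact key (v j) M hj.2.1 hj.2.2
      · obtain ⟨σm, hσmT, hσmax⟩ := T.exists_max_image s hTne
        set T' := T.erase σm with hT'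
        have hσmΩ' : σm ∈ Ω' := hTsub hσmT
        have ha : 0 < s σm := hspos σm hσmΩ'
        have haM : s σm ≤ M := hbound σm hσmT
        have hT'sub : T' ⊆ Ω' := (Finset.erase_subset _ _).trans hTsub
        have hT'card : T'.card ≤ k := by
          rw [hT', Finset.card_erase_of_mem hσmT]
          omega
        have IH := ih T' hT'card hT'sub (s σm) ha
          (fun σ hσ => hσmax σ (Finset.mem_of_mem_erase hσ))
        -- B_T ≤ F (s σm)
        have hBT : ∑ σ ∈ T, b σ ≤ F (s σm) := by
          have h1 : ∑ σ ∈ T, b σ ≤ ∑ σ' ∈ Ω'.filter (fun σ' => s σ' ≤ s σm), b σ' := by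
            apply Finset.sum_le_sum_of_subset_of_nonneg
            · intro σ hσ
              rw [Finset.mem_filter]
              exact ⟨hTsub hσ, hσmax σ hσ⟩
            · intro σ h1 _
              rw [Finset.mem_filter, hΩ', Finset.mem_filter] at h1
              exact hb σ h1.1.1
          exact h1.trans (H σm hσmΩ')
        -- split sums
        have hsum1 : ∑ σ ∈ T, s σ ^ (p-2) * b σ
            = s σm ^ (p-2) * b σm + ∑ σ ∈ T', s σ ^ (p-2) * b σ := by
          rw [hT', ← Finset.add_sum_erase _ _ hσmT]
        have hsum2 : ∑ σ ∈ T, b σ = b σm + ∑ σ ∈ T', b σ := by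
          rw [hT', ← Finset.add_sum_erase _ _ hσmT]
        have hμα : M ^ (p-2) ≤ s σm ^ (p-2) := Real.rpow_le_rpow_of_nonpos ha haM hp2'
        have hμ0 : (0:ℝ) ≤ M ^ (p-2) := Real.rpow_nonneg hM.le _
        have hFGm : M ^ (p-2) * (F M - F (s σm)) ≤ G M - G (s σm) := hFG _ _ ha haM
        have hprod : (s σm ^ (p-2) - M ^ (p-2)) * (∑ σ ∈ T, b σ)
            ≤ (s σm ^ (p-2) - M ^ (p-2)) * F (s σm) :=
          mul_le_mul_of_nonneg_left hBT (by linarith)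
        rw [hsum1, hsum2]
        rw [hsum2] at hprod
        nlinarith [IH, hFGm, hprod]
  -- assemble
  have hLHS : ∑ σ ∈ Ω', s σ ^ (p-2) * b σ ≤ lpOn p Finset.univ v ^ p := by
    rcases Ω'.eq_empty_or_nonempty with h | hne'
    · rw [h]
      simp only [Finset.sum_empty]
      exact Real.rpow_nonneg (Real.rpow_nonneg (Finset.sum_nonneg
        (fun j _ => Real.rpow_nonneg (abs_nonneg _) _)) _) _
    · obtain ⟨σm, hσmΩ', hσmax⟩ := Ω'.exists_max_image s hne'
      have hM : 0 < s σm := hspos σm hσmΩ'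
      have h1 := aux Ω'.card Ω' le_rfl (le_refl _) (s σm) hM hσmax
      have hB : ∑ σ ∈ Ω', b σ ≤ F (s σm) := by
        have := H σm hσmΩ'
        rwa [Finset.filter_true_of_mem (fun σ hσ => hσmax σ hσ)] at this
      have hμ0 : (0:ℝ) ≤ s σm ^ (p-2) := Real.rpow_nonneg hM.le _
      have h2 : ∑ σ ∈ Ω', s σ ^ (p-2) * b σ ≤ G (s σm) := by
        nlinarith [mul_nonneg hμ0 (sub_nonneg.2 hB)]
      have h3 : G (s σm) ≤ lpOn p Finset.univ v ^ p := by
        have hRHS : lpOn p Finset.univ v ^ p = ∑ j, |v j| ^ p := by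
          rw [lpOn, ← Real.rpow_mul (Finset.sum_nonneg
            (fun j _ => Real.rpow_nonneg (abs_nonneg _) _))]
          rw [one_div_mul_cancel (by positivity : p ≠ 0), Real.rpow_one]
        rw [hRHS, hG]
        apply Finset.sum_le_sum_of_subset_of_nonneg (Finset.filter_subset _ _) ?_ |>.trans ?_
        · intro j _ _
          exact Real.rpow_nonneg (hv0 j) _
        · apply le_of_eq
          apply Finset.sum_congr rfl
          intro j hj
          rw [abs_of_nonneg (hv0 j)]
      linarith
  exact hLHS

end
end
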